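/- arXiv:2003.05233 — 4 statements merged into one kernel-verified Lean document; each statement's English description precedes it below -/
import Mathlib

section
/- Let d > 0 be a real number. If H is a cover graph for G via L satisfying Δ̄_L(H) ≤ d and |L(v)| ≥ 4d for every vertex v of G, then H has an independent transversal with respect to L. -/
/-!
Write `IT(S)` for the independent transversals of the parts `L v`, `v ∈ S`. By induction on `S`,
`|L v| · |IT(S - v)| ≤ 2 |IT(S)|` for every `v ∈ S`. A transversal `B ∈ IT(S - v)` extends by
every colour of `L v` with no neighbour in `B`, and distinct extensions are distinct members of
`IT(S)`. An extension fails only because of an edge `cw` with `c ∈ L v` and `w ∈ B`. If `w ∈ L u`,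
deleting `w` maps the `B ∋ w` injectively into `IT(S - v - u)`, so by induction at most
`2 |IT(S - v)| / |L u| ≤ |IT(S - v)| / (2d)` transversals contain `w`. There are at most
`d |L v|` edges `cw`, so at most `|L v| |IT(S - v)| / 2` pairs `(B, c)` fail.
-/

open Finset

/-- `H` is a cover graph for `G` via `L`. -/
def IsCoverGraph {V W : Type} (G : SimpleGraph V) (H : SimpleGraph W)
    (L : V → Finset W) : Prop :=
  (∀ v v' : V, v ≠ v' → Disjoint (L v) (L v')) ∧
  (∀ w : W, ∃ v : V, w ∈ L v) ∧
  (∀ v v' : V, ¬ G.Adj v v' → ∀ c ∈ L v, ∀ c' ∈ L v', ¬ H.Adj c c')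

open Function

lemma Finset.sum_card_inter_eq_sum_card_filter_mem {α : Type*} [DecidableEq α] (s : Finset α)
    (B : Finset (Finset α)) : ∑ t ∈ B, #(s ∩ t) = ∑ a ∈ s, #{b ∈ B | a ∈ b} := by
  simp_rw [← filter_mem_eq_inter, card_eq_sum_ones, sum_filter]
  exact sum_comm

namespace SimpleGraph

variable {V W : Type*} [DecidableEq W] (H : SimpleGraph W) [DecidableRel H.Adj]

/-- Independent transversals of the parts `L v`, `v ∈ S`, each encoded by its set of colours
(which determines it once the parts are disjoint). -/
def indepTransversals (L : V → Finset W) (S : Finset V) : Finset (Finset W) :=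
  {A ∈ (S.biUnion L).powerset | (∀ v ∈ S, #(A ∩ L v) = 1) ∧ ∀ w ∈ A, ∀ w' ∈ A, ¬ H.Adj w w'}

variable {H} {L : V → Finset W} {S : Finset V} {A : Finset W}

@[simp]
lemma mem_indepTransversals :
    A ∈ H.indepTransversals L S ↔ A ⊆ S.biUnion L ∧ (∀ v ∈ S, #(A ∩ L v) = 1) ∧
      ∀ w ∈ A, ∀ w' ∈ A, ¬ H.Adj w w' := by
  simp [indepTransversals]

lemma indepTransversals_empty : H.indepTransversals L ∅ = {∅} := by
  ext A
  simp only [mem_indepTransversals, biUnion_empty, subset_empty, mem_singleton]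
  exact ⟨fun h => h.1, by rintro rfl; simp⟩

lemma exists_transversal_of_mem_indepTransversals [Fintype V]
    (hA : A ∈ H.indepTransversals L univ) :
    ∃ f : V → W, (∀ v, f v ∈ L v) ∧ ∀ v v', ¬ H.Adj (f v) (f v') := by
  obtain ⟨-, hcard, hind⟩ := mem_indepTransversals.mp hA
  choose f hf using fun v => card_eq_one.mp (hcard v (mem_univ v))
  have hmem (v : V) : f v ∈ A ∩ L v := hf v ▸ mem_singleton_self (f v)
  exact ⟨f, fun v => (mem_inter.mp (hmem v)).2,
    fun v v' => hind _ (mem_inter.mp (hmem v)).1 _ (mem_inter.mp (hmem v')).1⟩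

lemma card_le_card_filter_add_sum_card_inter [H.LocallyFinite] (s A : Finset W) :
    #s ≤ #{c ∈ s | ∀ w ∈ A, ¬ H.Adj c w} + ∑ c ∈ s, #(H.neighborFinset c ∩ A) := by
  rw [← card_filter_add_card_filter_not (fun c => ∀ w ∈ A, ¬ H.Adj c w)]
  gcongr
  rw [card_eq_sum_ones, sum_filter]
  refine sum_le_sum fun c _ => ?_
  split_ifs with hc
  · exact Nat.zero_le _
  · push Not at hc
    obtain ⟨w, hwA, hcw⟩ := hc
    exact card_pos.mpr ⟨w, mem_inter.mpr ⟨(mem_neighborFinset H c w).mpr hcw, hwA⟩⟩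

section Disjoint

variable (hL : Pairwise (Disjoint on L))
include hL

lemma disjoint_of_mem_indepTransversals (hA : A ∈ H.indepTransversals L S) {v : V}
    (hv : v ∉ S) : Disjoint A (L v) := by
  refine Finset.disjoint_left.mpr fun x hxA hxv => ?_
  obtain ⟨u, huS, hxu⟩ := mem_biUnion.mp ((mem_indepTransversals.mp hA).1 hxA)
  exact Finset.disjoint_left.mp (hL (ne_of_mem_of_not_mem huS hv)) hxu hxv

variable [DecidableEq V]

lemma insert_mem_indepTransversals {v : V} (hv : v ∈ S)
    (hA : A ∈ H.indepTransversals L (S.erase v)) {c : W} (hc : c ∈ L v)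
    (hcA : ∀ w ∈ A, ¬ H.Adj c w) : insert c A ∈ H.indepTransversals L S := by
  have hAv := disjoint_of_mem_indepTransversals hL hA (notMem_erase v S)
  obtain ⟨hsub, hcard, hind⟩ := mem_indepTransversals.mp hA
  refine mem_indepTransversals.mpr ⟨?_, fun u hu => ?_, ?_⟩
  · exact insert_subset (mem_biUnion.mpr ⟨v, hv, hc⟩)
      (hsub.trans (biUnion_subset_biUnion_of_subset_left L (erase_subset v S)))
  · obtain rfl | huv := eq_or_ne u v
    · rw [insert_inter_of_mem hc, disjoint_iff_inter_eq_empty.mp hAv]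
      rfl
    · rw [insert_inter_of_notMem (Finset.disjoint_left.mp (hL huv.symm) hc)]
      exact hcard u (mem_erase.mpr ⟨huv, hu⟩)
  · simp only [mem_insert]
    rintro w (rfl | hw) w' (rfl | hw')
    exacts [H.irrefl, hcA w' hw', fun h => hcA w hw h.symm, hind w hw w' hw']

lemma erase_mem_indepTransversals {u : V} (hu : u ∈ S) (hA : A ∈ H.indepTransversals L S)
    {w : W} (hwA : w ∈ A) (hwu : w ∈ L u) : A.erase w ∈ H.indepTransversals L (S.erase u) := by
  obtain ⟨hsub, hcard, hind⟩ := mem_indepTransversals.mp hA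
  refine mem_indepTransversals.mpr ⟨fun x hx => ?_, fun t ht => ?_,
    fun x hx y hy => hind x (mem_of_mem_erase hx) y (mem_of_mem_erase hy)⟩
  · obtain ⟨hxw, hxA⟩ := mem_erase.mp hx
    obtain ⟨t, ht, hxt⟩ := mem_biUnion.mp (hsub hxA)
    refine mem_biUnion.mpr ⟨t, mem_erase.mpr ⟨?_, ht⟩, hxt⟩
    rintro rfl
    exact hxw (card_le_one.mp (hcard t ht).le x (mem_inter.mpr ⟨hxA, hxt⟩) w
      (mem_inter.mpr ⟨hwA, hwu⟩))
  · obtain ⟨htu, ht⟩ := mem_erase.mp ht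
    rw [erase_inter, erase_eq_of_notMem fun h => Finset.disjoint_left.mp (hL htu.symm) hwu
      (mem_of_mem_inter_right h)]
    exact hcard t ht

lemma sum_card_extensions_le {v : V} (hv : v ∈ S) :
    ∑ A ∈ H.indepTransversals L (S.erase v), #{c ∈ L v | ∀ w ∈ A, ¬ H.Adj c w} ≤
      #(H.indepTransversals L S) := by
  rw [← card_sigma]
  refine card_le_card_of_injOn (fun p => insert p.2 p.1) (fun p hp => ?_) ?_
  · obtain ⟨hA, hc⟩ := mem_sigma.mp hp
    obtain ⟨hcv, hcA⟩ := mem_filter.mp hc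
    exact insert_mem_indepTransversals hL hv hA hcv hcA
  · rintro ⟨A, c⟩ hp ⟨A', c'⟩ hp' h
    simp only [coe_sigma, Set.mem_sigma_iff, mem_coe, mem_filter] at hp hp'
    obtain ⟨hA, hcv, -⟩ := hp
    obtain ⟨hA', hc'v, -⟩ := hp'
    have hAv := disjoint_of_mem_indepTransversals hL hA (notMem_erase v S)
    have hA'v := disjoint_of_mem_indepTransversals hL hA' (notMem_erase v S)
    simp only at h
    -- `A = insert c A \ L v`, and `c` is the only colour of `insert c A` in `L v`
    have hAA' : A = A' := by
      rw [← sdiff_eq_self_of_disjoint hAv, ← sdiff_eq_self_of_disjoint hA'v,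
        ← insert_sdiff_of_mem A hcv, ← insert_sdiff_of_mem A' hc'v, h]
    subst hAA'
    have hcc' : c = c' :=
      (mem_insert.mp (h ▸ mem_insert_self c A)).resolve_right
        fun hcA => Finset.disjoint_left.mp hAv hcA hcv
    rw [hcc']

lemma card_filter_mem_le {u : V} (hu : u ∈ S) {w : W} (hwu : w ∈ L u) :
    #{A ∈ H.indepTransversals L S | w ∈ A} ≤ #(H.indepTransversals L (S.erase u)) := by
  refine card_le_card_of_injOn (fun A => A.erase w) (fun A hA => ?_) fun A hA A' hA' h => ?_
  · obtain ⟨hA, hwA⟩ := mem_filter.mp hA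
    exact erase_mem_indepTransversals hL hu hA hwA hwu
  · rw [← insert_erase (mem_filter.mp hA).2, ← insert_erase (mem_filter.mp hA').2]
    exact congrArg (insert w) h

lemma card_mul_card_le_card_add_sum [H.LocallyFinite] {v : V} (hv : v ∈ S) :
    #(L v) * #(H.indepTransversals L (S.erase v)) ≤ #(H.indepTransversals L S) +
      ∑ c ∈ L v, ∑ w ∈ H.neighborFinset c, #{A ∈ H.indepTransversals L (S.erase v) | w ∈ A} := by
  set 𝒜 := H.indepTransversals L (S.erase v)
  calc #(L v) * #𝒜 = ∑ _A ∈ 𝒜, #(L v) := by rw [sum_const, smul_eq_mul, mul_comm]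
    _ ≤ ∑ A ∈ 𝒜, (#{c ∈ L v | ∀ w ∈ A, ¬ H.Adj c w} + ∑ c ∈ L v, #(H.neighborFinset c ∩ A)) :=
      sum_le_sum fun A _ => card_le_card_filter_add_sum_card_inter (L v) A
    _ = ∑ A ∈ 𝒜, #{c ∈ L v | ∀ w ∈ A, ¬ H.Adj c w} +
        ∑ c ∈ L v, ∑ w ∈ H.neighborFinset c, #{A ∈ 𝒜 | w ∈ A} := by
      rw [sum_add_distrib, sum_comm (s := 𝒜)]
      congr 1
      exact sum_congr rfl fun c _ => sum_card_inter_eq_sum_card_filter_mem _ _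
    _ ≤ _ := Nat.add_le_add_right (sum_card_extensions_le hL hv) _

variable {d : ℝ}

lemma two_mul_mul_card_filter_mem_le (hsize : ∀ v, 4 * d ≤ #(L v)) {T : Finset V}
    (hT : ∀ u ∈ T, (#(L u) : ℝ) * #(H.indepTransversals L (T.erase u)) ≤
      2 * #(H.indepTransversals L T)) (w : W) :
    2 * d * #{A ∈ H.indepTransversals L T | w ∈ A} ≤ #(H.indepTransversals L T) := by
  by_cases hw : ∃ u ∈ T, w ∈ L u
  · obtain ⟨u, hu, hwu⟩ := hw
    have hcount : (#{A ∈ H.indepTransversals L T | w ∈ A} : ℝ) ≤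
        #(H.indepTransversals L (T.erase u)) := by
      exact_mod_cast card_filter_mem_le hL hu hwu
    linarith [mul_le_mul_of_nonneg_right (hsize u) (Nat.cast_nonneg
      (α := ℝ) #{A ∈ H.indepTransversals L T | w ∈ A}),
      mul_le_mul_of_nonneg_left hcount (Nat.cast_nonneg (α := ℝ) #(L u)), hT u hu]
  · rw [filter_false_of_mem fun A hA hwA =>
      hw (mem_biUnion.mp ((mem_indepTransversals.mp hA).1 hwA))]
    simp

lemma card_mul_card_le_two_mul_card_of_forall [H.LocallyFinite] (hd : 0 < d) {v : V}
    (hv : v ∈ S) (havg : ∑ c ∈ L v, (H.degree c : ℝ) ≤ d * #(L v))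
    (hbound : ∀ w, 2 * d * #{A ∈ H.indepTransversals L (S.erase v) | w ∈ A} ≤
      #(H.indepTransversals L (S.erase v))) :
    (#(L v) : ℝ) * #(H.indepTransversals L (S.erase v)) ≤ 2 * #(H.indepTransversals L S) := by
  have hcount : (#(L v) : ℝ) * #(H.indepTransversals L (S.erase v)) ≤
      #(H.indepTransversals L S) + ∑ c ∈ L v, ∑ w ∈ H.neighborFinset c,
        (#{A ∈ H.indepTransversals L (S.erase v) | w ∈ A} : ℝ) := by
    exact_mod_cast card_mul_card_le_card_add_sum hL hv
  set N : ℝ := (#(H.indepTransversals L (S.erase v)) : ℝ)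
  set X : ℝ := ∑ c ∈ L v, ∑ w ∈ H.neighborFinset c,
    (#{A ∈ H.indepTransversals L (S.erase v) | w ∈ A} : ℝ)
  have hbad : d * (2 * X) ≤ d * (#(L v) * N) :=
    calc d * (2 * X)
        = ∑ c ∈ L v, ∑ w ∈ H.neighborFinset c,
            2 * d * (#{A ∈ H.indepTransversals L (S.erase v) | w ∈ A} : ℝ) := by
          simp_rw [X, mul_sum]; ring_nf
      _ ≤ ∑ c ∈ L v, ∑ _w ∈ H.neighborFinset c, N := by gcongr with c _ w _; exact hbound w
      _ = (∑ c ∈ L v, (H.degree c : ℝ)) * N := by simp [sum_mul, card_neighborFinset_eq_degree]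
      _ ≤ d * (#(L v) * N) := by rw [← mul_assoc]; gcongr
  linarith [le_of_mul_le_mul_left hbad hd]

lemma card_mul_card_le_two_mul_card [H.LocallyFinite] (hd : 0 < d)
    (havg : ∀ v, ∑ c ∈ L v, (H.degree c : ℝ) ≤ d * #(L v)) (hsize : ∀ v, 4 * d ≤ #(L v))
    (S : Finset V) :
    ∀ v ∈ S, (#(L v) : ℝ) * #(H.indepTransversals L (S.erase v)) ≤
      2 * #(H.indepTransversals L S) := by
  induction S using Finset.strongInduction with
  | H S ih =>
    exact fun v hv => card_mul_card_le_two_mul_card_of_forall hL hd hv (havg v)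
      (two_mul_mul_card_filter_mem_le hL hsize (ih _ (erase_ssubset hv)))

lemma indepTransversals_nonempty [H.LocallyFinite] (hd : 0 < d)
    (havg : ∀ v, ∑ c ∈ L v, (H.degree c : ℝ) ≤ d * #(L v)) (hsize : ∀ v, 4 * d ≤ #(L v))
    (S : Finset V) : (H.indepTransversals L S).Nonempty := by
  induction S using Finset.induction_on with
  | empty => simp [indepTransversals_empty]
  | insert v S hv ih =>
    have key := card_mul_card_le_two_mul_card hL hd havg hsize _ v (mem_insert_self v S)
    rw [erase_insert hv] at key
    have hLv : (0 : ℝ) < #(L v) := by linarith [hsize v]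
    have hS : (0 : ℝ) < #(H.indepTransversals L S) := by exact_mod_cast ih.card_pos
    rw [← card_pos, ← Nat.cast_pos (α := ℝ)]
    linarith [mul_pos hLv hS]

end Disjoint

end SimpleGraph

/-- If `H` is a cover graph for `G` via `L` with maximum average colour degree at
most `d` and all lists of size at least `4d`, then `H` has an independent
transversal with respect to `L`. -/
theorem transversal_of_four_times_average_degree
    {V W : Type} [Fintype V] [Fintype W] [DecidableEq V] [DecidableEq W]
    (d : ℝ) (hd : 0 < d)
    (G : SimpleGraph V) (H : SimpleGraph W) [DecidableRel H.Adj]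
    (L : V → Finset W)
    (hcover : IsCoverGraph G H L)
    -- maximum average colour degree at most d
    (havg : ∀ v : V, ∑ c ∈ L v, (H.degree c : ℝ) ≤ d * (L v).card)
    -- list sizes at least 4d
    (hsize : ∀ v : V, 4 * d ≤ ((L v).card : ℝ)) :
    ∃ f : V → W, (∀ v : V, f v ∈ L v) ∧ ∀ v v' : V, ¬ H.Adj (f v) (f v') := by
  obtain ⟨A, hA⟩ :=
    SimpleGraph.indepTransversals_nonempty (fun _ _ => hcover.1 _ _) hd havg hsize univ
  exact SimpleGraph.exists_transversal_of_mem_indepTransversals hA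
end

section
/- In the setting of the wasteful random colouring procedure with activation probability p, every vertex v ∈ V(G) and every colour c ∈ L(v) satisfy E[#coloured_nbrs_{v,c}] ≥ p·(1 − p/(1+ε))·deg_H(c). -/
open Finset
open scoped Classical

/-- An outcome of the wasteful random colouring procedure: an activation function
`A : V → Bool` and a colouring `ψ : V → W`. -/
abbrev Samp (V W : Type) : Type := (V → Bool) × (V → W)

/-- The probability weight of an outcome `ω`: each vertex is activated
independently with probability `p`, and each vertex receives an independent
uniformly random colour from its list. -/
noncomputable def wt {V W : Type} [Fintype V] (L : V → Finset W) (p : ℝ)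
    (ω : Samp V W) : ℝ :=
  (∏ v : V, if ω.1 v then p else 1 - p) *
    ∏ v : V, if ω.2 v ∈ L v then (1 : ℝ) / (L v).card else 0

/-- Probability of an event under the wasteful random colouring procedure. -/
noncomputable def prE {V W : Type} [Fintype V] [Fintype W] [DecidableEq V]
    (L : V → Finset W) (p : ℝ) (E : Samp V W → Prop) : ℝ :=
  ∑ ω : Samp V W, if E ω then wt L p ω else 0

/-- Expectation of a random variable under the wasteful random colouring
procedure. -/
noncomputable def ex {V W : Type} [Fintype V] [Fintype W] [DecidableEq V]
    (L : V → Finset W) (p : ℝ) (X : Samp V W → ℝ) : ℝ :=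
  ∑ ω : Samp V W, wt L p ω * X ω

/-- The number of `φ`-useable colours in `L v`, where `φ = ψ|_A`: colours `c ∈ L v`
such that no activated vertex got a colour `H`-adjacent to `c`. -/
noncomputable def useableCols {V W : Type} [Fintype V] (H : SimpleGraph W)
    (L : V → Finset W) (v : V) (ω : Samp V W) : ℕ :=
  ((L v).filter (fun c => ∀ u : V, ω.1 u = true → ¬ H.Adj c (ω.2 u))).card

/-- `A^col`: activated vertices `v` such that no activated `G`-neighbour received a
colour `H`-adjacent to the colour of `v`. -/
noncomputable def Acol {V W : Type} [Fintype V] (G : SimpleGraph V)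
    (H : SimpleGraph W) (ω : Samp V W) : Finset V :=
  Finset.univ.filter (fun v => ω.1 v = true ∧
    ∀ u : V, G.Adj v u → ω.1 u = true → ¬ H.Adj (ω.2 u) (ω.2 v))

/-- `#coloured_nbrs_{v,c}`: the number of `H`-neighbours of `c` lying in the list
of some vertex of `A^col`. -/
noncomputable def colouredNbrs {V W : Type} [Fintype V] [Fintype W]
    (G : SimpleGraph V) (H : SimpleGraph W) (L : V → Finset W) (c : W)
    (ω : Samp V W) : ℕ :=
  ((Finset.univ.filter (fun c' : W => H.Adj c c')).filter
    (fun c' => ∃ u ∈ Acol G H ω, c' ∈ L u)).card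

lemma sum_fn_prod {V X : Type} [Fintype V] [DecidableEq V] [Fintype X] (F : V → X → ℝ) :
    ∑ f : V → X, ∏ v, F v (f v) = ∏ v, ∑ x, F v x := by
  rw [Finset.prod_univ_sum, Fintype.piFinset_univ]

lemma samp_sum_prod {V W : Type} [Fintype V] [Fintype W] [DecidableEq V]
    (F : V → Bool → W → ℝ) :
    ∑ ω : Samp V W, ∏ v, F v (ω.1 v) (ω.2 v) = ∏ v, ∑ b, ∑ x, F v b x := by
  classical
  rw [Fintype.sum_prod_type]
  have h1 : ∀ a : V → Bool, ∑ ψ : V → W, ∏ v, F v (a v) (ψ v) = ∏ v, ∑ x, F v (a v) x :=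
    fun a => sum_fn_prod (fun v x => F v (a v) x)
  simp_rw [h1]
  exact sum_fn_prod (fun v b => ∑ x, F v b x)

lemma weier {ι : Type*} (s : Finset ι) (f : ι → ℝ) (h0 : ∀ i ∈ s, 0 ≤ f i)
    (h1 : ∀ i ∈ s, f i ≤ 1) :
    1 - ∑ i ∈ s, f i ≤ ∏ i ∈ s, (1 - f i) := by
  classical
  induction s using Finset.cons_induction with
  | empty => simp
  | cons a s ha ih =>
    rw [Finset.prod_cons, Finset.sum_cons]
    have h0a := h0 a (Finset.mem_cons_self a s)
    have h1a := h1 a (Finset.mem_cons_self a s)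
    have ih' := ih (fun i hi => h0 i (Finset.mem_cons_of_mem hi))
      (fun i hi => h1 i (Finset.mem_cons_of_mem hi))
    have hsum0 : 0 ≤ ∑ i ∈ s, f i := Finset.sum_nonneg (fun i hi => h0 i (Finset.mem_cons_of_mem hi))
    nlinarith [mul_le_mul_of_nonneg_left ih' (by linarith : (0:ℝ) ≤ 1 - f a)]

set_option maxHeartbeats 2000000 in
lemma key {V W : Type} [Fintype V] [Fintype W] [DecidableEq V] [DecidableEq W]
    (G : SimpleGraph V) (H : SimpleGraph W) [DecidableRel H.Adj]
    (L : V → Finset W) (Λ : ℕ) (hΛ : 0 < Λ) (hcard : ∀ v, (L v).card = Λ)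
    (hdisj : ∀ v v' : V, v ≠ v' → Disjoint (L v) (L v'))
    (p : ℝ) (hp0 : 0 ≤ p) (hp1 : p ≤ 1)
    (d : ℝ) (havg : ∀ v : V, ∑ c ∈ L v, (H.degree c : ℝ) ≤ d * Λ)
    (u : V) :
    p * (1 - p * d / (Λ : ℝ)) ≤ prE L p (fun ω => u ∈ Acol G H ω) := by
  classical
  have hΛr0 : 0 < (Λ : ℝ) := by exact_mod_cast hΛ
  have hΛne : (Λ : ℝ) ≠ 0 := ne_of_gt hΛr0
  set h : V → Bool → W → ℝ :=
    fun v b x => (if b then p else 1 - p) * (if x ∈ L v then 1 / (Λ : ℝ) else 0) with hh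
  set F : W → V → Bool → W → ℝ := fun c'' v b x =>
    h v b x * (if v = u then (if b = true ∧ x = c'' then 1 else 0)
      else (if G.Adj u v ∧ b = true ∧ H.Adj x c'' then 0 else 1)) with hF
  have hwt : ∀ ω : Samp V W, wt L p ω = ∏ v, h v (ω.1 v) (ω.2 v) := by
    intro ω
    unfold wt
    rw [← Finset.prod_mul_distrib]
    refine Finset.prod_congr rfl (fun w _ => ?_)
    simp only [hh, hcard w]
  have hAcol : ∀ ω : Samp V W, u ∈ Acol G H ω ↔ (ω.1 u = true ∧
      ∀ w, G.Adj u w → ω.1 w = true → ¬ H.Adj (ω.2 w) (ω.2 u)) := by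
    intro ω; simp [Acol]
  have claim : ∀ (ω : Samp V W) (inst : Decidable (u ∈ Acol G H ω)),
      (@ite _ (u ∈ Acol G H ω) inst (wt L p ω) 0)
      = ∑ c'' ∈ L u, ∏ v, F c'' v (ω.1 v) (ω.2 v) := by
    intro ω inst
    by_cases hx : ω.2 u ∈ L u
    · by_cases hb : ω.1 u = true
      · rw [Finset.sum_eq_single_of_mem (ω.2 u) hx (fun c'' _ hne => ?_)]
        · by_cases hA : u ∈ Acol G H ω
          · rw [if_pos hA, hwt ω]
            refine Finset.prod_congr rfl (fun w _ => ?_)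
            by_cases hw : w = u
            · subst hw; simp [hF, hb]
            · have hcond : ¬(G.Adj u w ∧ ω.1 w = true ∧ H.Adj (ω.2 w) (ω.2 u)) := by
                rintro ⟨h1, h2, h3⟩
                exact ((hAcol ω).1 hA).2 w h1 h2 h3
              simp [hF, hw, hcond]
          · rw [if_neg hA]
            have h2 : ¬ ∀ w, G.Adj u w → ω.1 w = true → ¬H.Adj (ω.2 w) (ω.2 u) :=
              fun hall => hA ((hAcol ω).2 ⟨hb, hall⟩)
            push_neg at h2
            obtain ⟨w, hadj, hwact, hH⟩ := h2
            have hwu : w ≠ u := by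
              rintro rfl; exact G.irrefl hadj
            symm
            apply Finset.prod_eq_zero (Finset.mem_univ w)
            simp [hF, hwu, hadj, hwact, hH]
        · apply Finset.prod_eq_zero (Finset.mem_univ u)
          simp [hF, hne.symm]
      · rw [if_neg (fun hA => hb ((hAcol ω).1 hA).1)]
        symm
        refine Finset.sum_eq_zero (fun c'' _ => ?_)
        apply Finset.prod_eq_zero (Finset.mem_univ u)
        simp [hF, hb]
    · have hwt0 : wt L p ω = 0 := by
        unfold wt
        refine mul_eq_zero.mpr (Or.inr ?_)
        apply Finset.prod_eq_zero (Finset.mem_univ u)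
        rw [if_neg hx]
      rw [hwt0, ite_self]
      symm
      refine Finset.sum_eq_zero (fun c'' _ => ?_)
      apply Finset.prod_eq_zero (Finset.mem_univ u)
      simp [hF, hh, hx]
  have main : prE L p (fun ω => u ∈ Acol G H ω)
      = ∑ c'' ∈ L u, ∏ v, (∑ b, ∑ x, F c'' v b x) := by
    have e1 : prE L p (fun ω => u ∈ Acol G H ω)
        = ∑ ω : Samp V W, ∑ c'' ∈ L u, ∏ v, F c'' v (ω.1 v) (ω.2 v) :=
      Finset.sum_congr rfl (fun ω _ => claim ω _)
    rw [e1, Finset.sum_comm]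
    exact Finset.sum_congr rfl (fun c'' _ => samp_sum_prod (F c''))
  rw [main]
  -- per colour lower bound
  have hterm : ∀ c'' ∈ L u, (p / (Λ : ℝ)) * (1 - p * (H.degree c'' : ℝ) / (Λ : ℝ))
      ≤ ∏ v, (∑ b, ∑ x, F c'' v b x) := by
    intro c'' hcu
    have hsum_h : ∀ w b, ∑ x, h w b x = (if b then p else 1 - p) := by
      intro w b
      simp only [hh]
      rw [← Finset.mul_sum]
      have : (∑ x, (if x ∈ L w then 1 / (Λ : ℝ) else 0)) = 1 := by
        rw [Finset.sum_ite_mem, Finset.univ_inter, Finset.sum_const, hcard w,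
          nsmul_eq_mul]
        field_simp
      rw [this, mul_one]
    have hSu : (∑ b, ∑ x, F c'' u b x) = p / (Λ : ℝ) := by
      rw [Fintype.sum_bool]
      have h1 : ∑ x, F c'' u true x = p / (Λ : ℝ) := by
        have he : ∀ x : W, F c'' u true x = if x = c'' then p / (Λ : ℝ) else 0 := by
          intro x
          by_cases hxc : x = c''
          · subst hxc
            simp [hF, hh, hcu, div_eq_mul_inv]
          · simp [hF, hxc]
        rw [Finset.sum_congr rfl (fun x _ => he x)]
        simp
      have h2 : ∑ x, F c'' u false x = 0 := by
        refine Finset.sum_eq_zero (fun x _ => ?_)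
        simp [hF]
      rw [h1, h2, add_zero]
    have hSv_nadj : ∀ w, w ≠ u → ¬G.Adj u w → (∑ b, ∑ x, F c'' w b x) = 1 := by
      intro w hwu hadj
      have hFe : ∀ b x, F c'' w b x = h w b x := by
        intro b x
        simp [hF, hwu, hadj]
      simp only [hFe]
      rw [Fintype.sum_bool, hsum_h, hsum_h]
      simp
    have hSv_adj : ∀ w, w ≠ u → G.Adj u w →
        (∑ b, ∑ x, F c'' w b x)
          = 1 - p * ((((L w).filter (fun x => H.Adj x c'')).card : ℝ)) / (Λ : ℝ) := by
      intro w hwu hadj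
      rw [Fintype.sum_bool]
      have hfalse : ∑ x, F c'' w false x = 1 - p := by
        have hFe : ∀ x, F c'' w false x = h w false x := by
          intro x; simp [hF, hwu]
        rw [Finset.sum_congr rfl (fun x _ => hFe x), hsum_h]
        simp
      have htrue : ∑ x, F c'' w true x
          = (((L w).filter (fun x => ¬ H.Adj x c'')).card : ℝ) * (p / (Λ : ℝ)) := by
        have he : ∀ x, F c'' w true x
            = if x ∈ (L w).filter (fun x => ¬ H.Adj x c'') then p / (Λ : ℝ) else 0 := by
          intro x
          by_cases hxL : x ∈ L w
          · by_cases hxa : H.Adj x c''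
            · simp [hF, hh, hxL, hxa, hadj, hwu]
            · simp [hF, hh, hxL, hxa, hadj, hwu, div_eq_mul_inv]
          · simp [hF, hh, hxL]
        rw [Finset.sum_congr rfl (fun x _ => he x), Finset.sum_ite_mem,
          Finset.univ_inter, Finset.sum_const, nsmul_eq_mul]
      have hcards : ((((L w).filter (fun x => H.Adj x c'')).card : ℝ))
          + (((L w).filter (fun x => ¬ H.Adj x c'')).card : ℝ) = (Λ : ℝ) := by
        have h0 := Finset.card_filter_add_card_filter_not
          (s := L w) (p := fun x => H.Adj x c'')
        rw [hcard w] at h0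
        exact_mod_cast h0
      rw [htrue, hfalse]
      field_simp
      nlinarith [hcards]
    -- assemble the product
    rw [← Finset.mul_prod_erase Finset.univ _ (Finset.mem_univ u), hSu]
    have hx01 : ∀ w ∈ Finset.univ.erase u,
        (0 ≤ (if G.Adj u w then p * ((((L w).filter (fun x => H.Adj x c'')).card : ℝ)) / (Λ : ℝ) else 0)) ∧
        ((if G.Adj u w then p * ((((L w).filter (fun x => H.Adj x c'')).card : ℝ)) / (Λ : ℝ) else 0) ≤ 1) := by
      intro w _
      by_cases hadj : G.Adj u w
      · rw [if_pos hadj]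
        have hNle : ((((L w).filter (fun x => H.Adj x c'')).card : ℝ)) ≤ (Λ : ℝ) := by
          have h0 : ((L w).filter (fun x => H.Adj x c'')).card ≤ Λ := by
            rw [← hcard w]; exact Finset.card_filter_le _ _
          exact_mod_cast h0
        constructor
        · positivity
        · rw [div_le_one hΛr0]
          nlinarith [Nat.cast_nonneg (α := ℝ) (((L w).filter (fun x => H.Adj x c'')).card)]
      · rw [if_neg hadj]; norm_num
    have hprod_eq : ∏ w ∈ Finset.univ.erase u, (∑ b, ∑ x, F c'' w b x)
        = ∏ w ∈ Finset.univ.erase u,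
            (1 - (if G.Adj u w then p * ((((L w).filter (fun x => H.Adj x c'')).card : ℝ)) / (Λ : ℝ) else 0)) := by
      refine Finset.prod_congr rfl (fun w hw => ?_)
      have hwu : w ≠ u := Finset.ne_of_mem_erase hw
      by_cases hadj : G.Adj u w
      · rw [hSv_adj w hwu hadj, if_pos hadj]
      · rw [hSv_nadj w hwu hadj, if_neg hadj]; ring
    have hsumx : ∑ w ∈ Finset.univ.erase u,
          (if G.Adj u w then p * ((((L w).filter (fun x => H.Adj x c'')).card : ℝ)) / (Λ : ℝ) else 0)
        ≤ p * (H.degree c'' : ℝ) / (Λ : ℝ) := by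
      have hstep1 : ∑ w ∈ Finset.univ.erase u,
            (if G.Adj u w then p * ((((L w).filter (fun x => H.Adj x c'')).card : ℝ)) / (Λ : ℝ) else 0)
          ≤ ∑ w : V, (if G.Adj u w then p * ((((L w).filter (fun x => H.Adj x c'')).card : ℝ)) / (Λ : ℝ) else 0) := by
        refine Finset.sum_le_sum_of_subset_of_nonneg (Finset.subset_univ _) (fun w _ _ => ?_)
        by_cases hadj : G.Adj u w
        · rw [if_pos hadj]; positivity
        · rw [if_neg hadj]
      have hstep2 : ∑ w : V, (if G.Adj u w then p * ((((L w).filter (fun x => H.Adj x c'')).card : ℝ)) / (Λ : ℝ) else 0)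
          = (p / (Λ : ℝ)) * ∑ w ∈ Finset.univ.filter (fun w => G.Adj u w),
              ((((L w).filter (fun x => H.Adj x c'')).card : ℝ)) := by
        rw [Finset.sum_filter, Finset.mul_sum]
        refine Finset.sum_congr rfl (fun w _ => ?_)
        by_cases hadj : G.Adj u w
        · rw [if_pos hadj, if_pos hadj]; ring
        · rw [if_neg hadj, if_neg hadj]; ring
      have hstep3 : ∑ w ∈ Finset.univ.filter (fun w => G.Adj u w),
            ((((L w).filter (fun x => H.Adj x c'')).card : ℝ))
          ≤ (H.degree c'' : ℝ) := by
        have hnat : ∑ w ∈ Finset.univ.filter (fun w => G.Adj u w),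
              ((L w).filter (fun x => H.Adj x c'')).card ≤ H.degree c'' := by
          have hdisjB : ∀ w1 ∈ Finset.univ.filter (fun w => G.Adj u w),
              ∀ w2 ∈ Finset.univ.filter (fun w => G.Adj u w), w1 ≠ w2 →
              Disjoint ((L w1).filter (fun x => H.Adj x c''))
                ((L w2).filter (fun x => H.Adj x c'')) := by
            intro w1 _ w2 _ hne
            exact Finset.disjoint_filter_filter (hdisj w1 w2 hne)
          calc ∑ w ∈ Finset.univ.filter (fun w => G.Adj u w),
                ((L w).filter (fun x => H.Adj x c'')).card
              = ((Finset.univ.filter (fun w => G.Adj u w)).biUnion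
                  (fun w => (L w).filter (fun x => H.Adj x c''))).card :=
                (Finset.card_biUnion hdisjB).symm
            _ ≤ (H.neighborFinset c'').card := by
                refine Finset.card_le_card (fun x hx => ?_)
                rw [Finset.mem_biUnion] at hx
                obtain ⟨w, _, hxw⟩ := hx
                rw [SimpleGraph.mem_neighborFinset]
                exact ((Finset.mem_filter.mp hxw).2).symm
            _ = H.degree c'' := rfl
        exact_mod_cast hnat
      calc ∑ w ∈ Finset.univ.erase u,
            (if G.Adj u w then p * ((((L w).filter (fun x => H.Adj x c'')).card : ℝ)) / (Λ : ℝ) else 0)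
          ≤ (p / (Λ : ℝ)) * ∑ w ∈ Finset.univ.filter (fun w => G.Adj u w),
              ((((L w).filter (fun x => H.Adj x c'')).card : ℝ)) := by
            rw [← hstep2]; exact hstep1
        _ ≤ (p / (Λ : ℝ)) * (H.degree c'' : ℝ) :=
            mul_le_mul_of_nonneg_left hstep3 (by positivity)
        _ = p * (H.degree c'' : ℝ) / (Λ : ℝ) := by ring
    have hweier := weier (Finset.univ.erase u)
      (fun w => (if G.Adj u w then p * ((((L w).filter (fun x => H.Adj x c'')).card : ℝ)) / (Λ : ℝ) else 0))
      (fun w hw => (hx01 w hw).1) (fun w hw => (hx01 w hw).2)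
    rw [hprod_eq]
    refine mul_le_mul_of_nonneg_left ?_ (by positivity)
    calc (1 : ℝ) - p * (H.degree c'' : ℝ) / (Λ : ℝ)
        ≤ 1 - ∑ w ∈ Finset.univ.erase u,
            (if G.Adj u w then p * ((((L w).filter (fun x => H.Adj x c'')).card : ℝ)) / (Λ : ℝ) else 0) := by
          linarith
      _ ≤ _ := hweier
  -- sum the per colour bounds
  have hsum_lb : ∑ c'' ∈ L u, (p / (Λ : ℝ)) * (1 - p * (H.degree c'' : ℝ) / (Λ : ℝ))
      ≤ ∑ c'' ∈ L u, ∏ v, (∑ b, ∑ x, F c'' v b x) :=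
    Finset.sum_le_sum hterm
  refine le_trans ?_ hsum_lb
  have heq : ∑ c'' ∈ L u, (p / (Λ : ℝ)) * (1 - p * (H.degree c'' : ℝ) / (Λ : ℝ))
      = p - (p / (Λ : ℝ))^2 * ∑ c'' ∈ L u, (H.degree c'' : ℝ) := by
    have he : ∀ c'' ∈ L u, (p / (Λ : ℝ)) * (1 - p * (H.degree c'' : ℝ) / (Λ : ℝ))
        = p / (Λ : ℝ) - (p / (Λ : ℝ))^2 * (H.degree c'' : ℝ) := by
      intro c'' _; ring
    rw [Finset.sum_congr rfl he, Finset.sum_sub_distrib, Finset.sum_const, hcard u,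
      nsmul_eq_mul, ← Finset.mul_sum]
    have hΛp : (Λ : ℝ) * (p / (Λ : ℝ)) = p := by field_simp
    rw [hΛp]
  rw [heq]
  have h1 : (p / (Λ : ℝ))^2 * ∑ c'' ∈ L u, (H.degree c'' : ℝ) ≤ (p / (Λ : ℝ))^2 * (d * (Λ : ℝ)) :=
    mul_le_mul_of_nonneg_left (havg u) (by positivity)
  have h2 : (p / (Λ : ℝ))^2 * (d * (Λ : ℝ)) = p * (p * d / (Λ : ℝ)) := by
    field_simp
  nlinarith [h1, h2]

/-- Expected number of coloured neighbours:
`E[#coloured_nbrs_{v,c}] ≥ p·(1 − p/(1+ε))·deg_H(c)` in the setting of the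
wasteful random colouring procedure. -/
theorem expected_coloured_nbrs
    {V W : Type} [Fintype V] [Fintype W] [DecidableEq V] [DecidableEq W]
    (ε d : ℝ) (hε : 0 < ε) (hd : 1 ≤ d)
    (Λ : ℕ) (hΛlb : (1 + ε) * d ≤ (Λ : ℝ)) (hΛub : (Λ : ℝ) ≤ 4 * d + 1)
    (p : ℝ) (hplb : 1 / (Real.log d) ^ 2 ≤ p) (hpub : p ≤ 1 / Real.log d)
    (G : SimpleGraph V) (H : SimpleGraph W) [DecidableRel H.Adj]
    (L : V → Finset W)
    (hcover : IsCoverGraph G H L)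
    (hcard : ∀ v : V, (L v).card = Λ)
    (havg : ∀ v : V, ∑ c ∈ L v, (H.degree c : ℝ) ≤ d * Λ)
    (hmaxdeg : ∀ c : W, (H.degree c : ℝ) ≤ d * Real.log d)
    (hmu : ∀ v v' : V, G.Adj v v' → ∀ c ∈ L v,
      (((L v').filter (fun c' => H.Adj c c')).card : ℝ) ≤ d ^ ((1 : ℝ) / 4))
    (hedge : ∀ v v' : V, G.Adj v v' → ∃ c ∈ L v, ∃ c' ∈ L v', H.Adj c c')
    (v : V) (c : W) (hc : c ∈ L v) :
    p * (1 - p / (1 + ε)) * (H.degree c : ℝ)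
      ≤ ex L p (fun ω => (colouredNbrs G H L c ω : ℝ)) := by
  unfold ex IsCoverGraph at *
  classical
  obtain ⟨hdisj, hcov, -⟩ := hcover
  have hlog0 : 0 ≤ Real.log d := Real.log_nonneg hd
  have hp0 : 0 ≤ p := by
    rcases eq_or_lt_of_le hlog0 with hl | hl
    · have h0 : (1 : ℝ) / (Real.log d) ^ 2 = 0 := by rw [← hl]; norm_num
      linarith
    · have : 0 < 1 / (Real.log d) ^ 2 := by positivity
      linarith
  have hp1 : p ≤ 1 := by
    rcases eq_or_lt_of_le hlog0 with hl | hl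
    · have h0 : (1 : ℝ) / Real.log d = 0 := by rw [← hl]; norm_num
      linarith
    · have hlog1 : 1 ≤ Real.log d := by
        by_contra hcon
        push_neg at hcon
        have : 1 / Real.log d < 1 / (Real.log d) ^ 2 := by
          exact div_lt_div_of_pos_left one_pos (by positivity) (by nlinarith)
        linarith
      have : 1 / Real.log d ≤ 1 := by
        rw [div_le_one (by linarith)]; exact hlog1
      linarith
  have hΛpos : 0 < (Λ : ℝ) := lt_of_lt_of_le (by nlinarith) hΛlb
  have hΛn : 0 < Λ := by exact_mod_cast hΛpos
  have hkey : ∀ u : V, p * (1 - p / (1 + ε)) ≤ prE L p (fun ω => u ∈ Acol G H ω) := by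
    intro u
    refine le_trans ?_ (key G H L Λ hΛn hcard hdisj p hp0 hp1 d havg u)
    refine mul_le_mul_of_nonneg_left ?_ hp0
    have hdd : p * d / (Λ : ℝ) ≤ p / (1 + ε) := by
      rw [div_le_div_iff₀ hΛpos (by linarith)]
      nlinarith
    linarith
  set N : Finset W := Finset.univ.filter (fun c' => H.Adj c c') with hN
  have hdeg : (H.degree c : ℝ) = (N.card : ℝ) := by
    rw [hN]
    norm_cast
    rw [← SimpleGraph.card_neighborFinset_eq_degree]
    congr 1
    ext x
    simp [SimpleGraph.mem_neighborFinset]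
  have hex : ∑ ω : Samp V W, wt L p ω * (colouredNbrs G H L c ω : ℝ)
      = ∑ c' ∈ N, prE L p (fun ω => ∃ u ∈ Acol G H ω, c' ∈ L u) := by
    have hpt : ∀ ω : Samp V W, wt L p ω * (colouredNbrs G H L c ω : ℝ)
        = ∑ c' ∈ N, (if (∃ u ∈ Acol G H ω, c' ∈ L u) then wt L p ω else 0) := by
      intro ω
      unfold colouredNbrs
      rw [Finset.card_filter]
      push_cast
      rw [Finset.mul_sum]
      refine Finset.sum_congr (Finset.ext (fun a => by simp [hN])) (fun c' _ => ?_)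
      by_cases hE : ∃ u ∈ Acol G H ω, c' ∈ L u
      · rw [if_pos hE, if_pos hE, mul_one]
      · rw [if_neg hE, if_neg hE, mul_zero]
    rw [Finset.sum_congr rfl (fun ω _ => hpt ω), Finset.sum_comm]
    refine Finset.sum_congr rfl (fun c' _ => Finset.sum_congr rfl (fun ω _ => ?_))
    by_cases hE : ∃ u ∈ Acol G H ω, c' ∈ L u
    · rw [if_pos hE, if_pos hE]
    · rw [if_neg hE, if_neg hE]
  rw [hex, hdeg, mul_comm (p * (1 - p / (1 + ε))) (N.card : ℝ), ← nsmul_eq_mul,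
    ← Finset.sum_const]
  refine Finset.sum_le_sum (fun c' hc' => ?_)
  obtain ⟨u, hu⟩ := hcov c'
  have hiff : ∀ ω : Samp V W, (∃ u' ∈ Acol G H ω, c' ∈ L u') ↔ u ∈ Acol G H ω := by
    intro ω
    constructor
    · rintro ⟨u', hu', hcu'⟩
      have heq : u' = u := by
        by_contra hne
        exact (Finset.disjoint_left.mp (hdisj u' u hne) hcu') hu
      rwa [heq] at hu'
    · intro hmem; exact ⟨u, hmem, hu⟩
  have hpr : prE L p (fun ω => ∃ u' ∈ Acol G H ω, c' ∈ L u')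
      = prE L p (fun ω => u ∈ Acol G H ω) := by
    unfold prE
    refine Finset.sum_congr rfl (fun ω _ => ?_)
    by_cases hE : u ∈ Acol G H ω
    · rw [if_pos ((hiff ω).mpr hE), if_pos hE]
    · rw [if_neg (fun hh => hE ((hiff ω).mp hh)), if_neg hE]
  rw [hpr]
  exact hkey u
end

section
/- There exists d₀ (depending only on ε) such that for all d ≥ d₀, in the setting of the wasteful random colouring procedure with activation probability p, every vertex v ∈ V(G) satisfies P[Ω*_v] ≤ 16·e³·d⁵·(e/log d)^{(log d)² − 3}. -/
/-!
For a fixed vertex `u` and colour `c`, `#conflicts_{u,c}` counts the neighbours `x` of `u` that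
are activated and coloured into `N_H(c)`; these events are independent, with total mean
`p · Σ_x |N_H(c) ∩ L(x)| / Λ ≤ p · deg_H(c) / Λ ≤ 1`. Hence `E[r ^ #conflicts] ≤ exp (r - 1)`,
and Markov's inequality with `r = log d` gives `P[#conflicts ≥ (log d)²] ≤ d · (log d)^{-(log d)²}`.
Every edge of `G` carries an edge of `H`, so `Δ(G) ≤ dΛ ≤ 5d²`; a union bound over the
`≤ 1 + Δ(G) + Δ(G)²` vertices at distance at most 2 from `v` and their `Λ` colours costs a factor
`≤ 155 d⁵`, which the stated bound absorbs.
-/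

open Finset
open scoped Classical

/-- `#conflicts_{u,c}`: the number of activated `G`-neighbours `w` of `u` whose
colour is `H`-adjacent to `c`. -/
noncomputable def conflicts {V W : Type} [Fintype V] (G : SimpleGraph V)
    (H : SimpleGraph W) (u : V) (c : W) (ω : Samp V W) : ℕ :=
  (Finset.univ.filter
    (fun x : V => G.Adj u x ∧ ω.1 x = true ∧ H.Adj c (ω.2 x))).card

section Procedure

variable {V W : Type} [Fintype V] {L : V → Finset W} {p : ℝ}

theorem wt_nonneg (hp0 : 0 ≤ p) (hp1 : p ≤ 1) (ω : Samp V W) : 0 ≤ wt L p ω := by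
  refine mul_nonneg (prod_nonneg fun v _ => ?_) (prod_nonneg fun v _ => ?_)
  · split <;> linarith
  · split <;> positivity

variable [Fintype W] [DecidableEq V]

theorem sum_samp_prod (F : V → Bool → W → ℝ) :
    ∑ ω : Samp V W, ∏ v, F v (ω.1 v) (ω.2 v) = ∏ v, ∑ b, ∑ w, F v b w := by
  rw [Fintype.sum_prod_type, Fintype.prod_sum]
  exact sum_congr rfl fun a _ => (Fintype.prod_sum fun v w => F v (a v) w).symm

theorem ex_prod (f : V → Bool → W → ℝ) :
    ex L p (fun ω => ∏ v, f v (ω.1 v) (ω.2 v)) =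
      ∏ v, (p * ∑ w ∈ L v, f v true w + (1 - p) * ∑ w ∈ L v, f v false w) / #(L v) := by
  simp only [ex, wt, ← prod_mul_distrib]
  rw [sum_samp_prod fun v b w =>
    ((if b then p else 1 - p) * if w ∈ L v then 1 / (#(L v) : ℝ) else 0) * f v b w]
  refine prod_congr rfl fun v _ => ?_
  have hunif : ∀ b, ∑ w, (if w ∈ L v then 1 / (#(L v) : ℝ) else 0) * f v b w =
      (∑ w ∈ L v, f v b w) / #(L v) := fun b => by
    simp only [ite_mul, zero_mul, Fintype.sum_ite_mem, sum_div, one_div_mul_eq_div]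
  simp only [Fintype.sum_bool, if_true, Bool.false_eq_true, if_false, mul_assoc, ← mul_sum,
    hunif]
  ring

theorem prE_congr {E E' : Samp V W → Prop} (h : ∀ ω, E ω ↔ E' ω) : prE L p E = prE L p E' :=
  sum_congr rfl fun ω _ => if_congr (h ω) rfl rfl

theorem prE_nonneg (hp0 : 0 ≤ p) (hp1 : p ≤ 1) (E : Samp V W → Prop) : 0 ≤ prE L p E :=
  sum_nonneg fun ω _ => by
    split
    exacts [wt_nonneg hp0 hp1 ω, le_rfl]

theorem prE_exists_le_sum {ι : Type} (hp0 : 0 ≤ p) (hp1 : p ≤ 1) (s : Finset ι)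
    (E : ι → Samp V W → Prop) :
    prE L p (fun ω => ∃ i ∈ s, E i ω) ≤ ∑ i ∈ s, prE L p (E i) := by
  simp only [prE]
  rw [sum_comm]
  refine sum_le_sum fun ω _ => ?_
  have hnn : ∀ i ∈ s, 0 ≤ if E i ω then wt L p ω else 0 := fun i _ => by
    split
    exacts [wt_nonneg hp0 hp1 ω, le_rfl]
  split_ifs with h
  · obtain ⟨i, hi, hE⟩ := h
    simpa only [if_pos hE] using single_le_sum hnn hi
  · exact sum_nonneg hnn

theorem prE_le_ex_pow_mul_rpow (hp0 : 0 ≤ p) (hp1 : p ≤ 1) (X : Samp V W → ℕ) {r : ℝ}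
    (hr : 1 ≤ r) (s : ℝ) :
    prE L p (fun ω => s ≤ X ω) ≤ ex L p (fun ω => r ^ X ω) * r ^ (-s) := by
  rw [prE, ex, sum_mul]
  refine sum_le_sum fun ω _ => ?_
  have hw := wt_nonneg (L := L) hp0 hp1 ω
  have hr0 : 0 < r := by linarith
  split_ifs with h
  · have : 1 ≤ r ^ X ω * r ^ (-s) := by
      rw [← Real.rpow_natCast, ← Real.rpow_add hr0]
      exact Real.one_le_rpow hr (by linarith)
    nlinarith
  · positivity

end Procedure

theorem sum_ite_eq_card_add_mul_card_filter {α : Type} (s : Finset α) (P : α → Prop)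
    [DecidablePred P] (r : ℝ) :
    ∑ a ∈ s, (if P a then r else 1) = #s + (r - 1) * #{a ∈ s | P a} := by
  rw [sum_ite, sum_const, sum_const, nsmul_eq_mul, nsmul_eq_mul, mul_one,
    ← card_filter_add_card_filter_not (s := s) P]
  push_cast
  ring

section Conflicts

variable {V W : Type} [Fintype V] (G : SimpleGraph V) (H : SimpleGraph W) [DecidableRel H.Adj]

theorem pow_conflicts (r : ℝ) (u : V) (c : W) (ω : Samp V W) :
    r ^ conflicts G H u c ω =
      ∏ x, if G.Adj u x ∧ ω.1 x = true ∧ H.Adj c (ω.2 x) then r else 1 := by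
  rw [conflicts, ← prod_const, prod_filter]
  congr!

variable [Fintype W] [DecidableEq V] {L : V → Finset W} {p : ℝ}

theorem ex_pow_conflicts (hL : ∀ x, (L x).Nonempty) (r : ℝ) (u : V) (c : W) :
    ex L p (fun ω => r ^ conflicts G H u c ω) =
      ∏ x ∈ G.neighborFinset u, (1 + (r - 1) * p * #{c' ∈ L x | H.Adj c c'} / #(L x)) := by
  simp only [pow_conflicts]
  rw [ex_prod fun x b w => if G.Adj u x ∧ b = true ∧ H.Adj c w then r else 1,
    G.neighborFinset_eq_filter, prod_filter]
  refine prod_congr rfl fun x _ => ?_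
  have hn : (#(L x) : ℝ) ≠ 0 := by exact_mod_cast (hL x).card_pos.ne'
  by_cases hux : G.Adj u x
  · simp only [hux, true_and, Bool.false_eq_true, false_and, if_true, if_false,
      sum_ite_eq_card_add_mul_card_filter, sum_const, nsmul_eq_mul, mul_one]
    field_simp
    ring
  · simp only [hux, false_and, if_false, sum_const, nsmul_eq_mul, mul_one]
    field_simp
    ring

end Conflicts

theorem IsCoverGraph.pairwise_disjoint {V W : Type} {G : SimpleGraph V} {H : SimpleGraph W}
    {L : V → Finset W} (h : IsCoverGraph G H L) : Pairwise (Function.onFun Disjoint L) :=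
  fun v v' hvv' => h.1 v v' hvv'

theorem card_ball_two_le {V : Type} [Fintype V] [DecidableEq V] (G : SimpleGraph V) (v : V) :
    #{u | u = v ∨ G.Adj v u ∨ ∃ x, G.Adj v x ∧ G.Adj x u} ≤
      1 + G.maxDegree + G.maxDegree ^ 2 := by
  have hsub : ({u | u = v ∨ G.Adj v u ∨ ∃ x, G.Adj v x ∧ G.Adj x u} : Finset V) ⊆
      insert v (G.neighborFinset v ∪ (G.neighborFinset v).biUnion fun x => G.neighborFinset x) := by
    intro u hu
    simpa only [mem_filter, mem_univ, true_and, mem_insert, mem_union, mem_biUnion,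
      SimpleGraph.mem_neighborFinset] using hu
  have hΔ := G.degree_le_maxDegree v
  have hbiUnion :
      #((G.neighborFinset v).biUnion fun x => G.neighborFinset x) ≤ G.maxDegree ^ 2 := by
    refine (card_biUnion_le_card_mul _ _ G.maxDegree fun x _ => ?_).trans ?_
    · rw [G.card_neighborFinset_eq_degree]
      exact G.degree_le_maxDegree x
    · rw [G.card_neighborFinset_eq_degree, sq]
      exact Nat.mul_le_mul_right _ hΔ
  calc _ ≤ _ := card_le_card hsub
    _ ≤ 1 + (G.degree v + G.maxDegree ^ 2) := by
        rw [← G.card_neighborFinset_eq_degree, add_comm 1]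
        exact (card_insert_le _ _).trans (by gcongr; exact (card_union_le _ _).trans (by gcongr))
    _ ≤ 1 + G.maxDegree + G.maxDegree ^ 2 := by omega

section CoverGraph

open Function

variable {V W : Type} [Fintype W] (G : SimpleGraph V) (H : SimpleGraph W) [DecidableRel H.Adj]
  {L : V → Finset W}

theorem sum_card_filter_adj_le_degree (hdisj : Pairwise (Disjoint on L)) (s : Finset V)
    (c : W) : ∑ x ∈ s, #{c' ∈ L x | H.Adj c c'} ≤ H.degree c := by
  rw [← card_biUnion fun x _ y _ hxy => disjoint_filter_filter (hdisj hxy),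
    ← H.card_neighborFinset_eq_degree]
  refine card_le_card fun c' hc' => ?_
  obtain ⟨x, -, hx⟩ := mem_biUnion.1 hc'
  exact (H.mem_neighborFinset c c').2 (mem_filter.1 hx).2

variable [Fintype V]

theorem degree_le_sum_degree (hdisj : Pairwise (Disjoint on L))
    (hedge : ∀ v v', G.Adj v v' → ∃ c ∈ L v, ∃ c' ∈ L v', H.Adj c c') (u : V) :
    G.degree u ≤ ∑ c ∈ L u, H.degree c :=
  calc G.degree u = ∑ _x ∈ G.neighborFinset u, 1 := by
        rw [sum_const, smul_eq_mul, mul_one, G.card_neighborFinset_eq_degree]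
    _ ≤ ∑ x ∈ G.neighborFinset u, ∑ c ∈ L u, #{c' ∈ L x | H.Adj c c'} :=
        sum_le_sum fun x hx => by
          obtain ⟨c, hc, c', hc', hcc'⟩ := hedge u x ((G.mem_neighborFinset u x).1 hx)
          exact (card_pos.2 ⟨c', mem_filter.2 ⟨hc', hcc'⟩⟩).trans_le
            (single_le_sum (f := fun c => #{c' ∈ L x | H.Adj c c'}) (by simp) hc)
    _ = ∑ c ∈ L u, ∑ x ∈ G.neighborFinset u, #{c' ∈ L x | H.Adj c c'} := sum_comm
    _ ≤ ∑ c ∈ L u, H.degree c :=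
        sum_le_sum fun c _ => sum_card_filter_adj_le_degree H hdisj _ c

theorem maxDegree_le_of_sum_degree_le [Nonempty V] (hdisj : Pairwise (Disjoint on L))
    (hedge : ∀ v v', G.Adj v v' → ∃ c ∈ L v, ∃ c' ∈ L v', H.Adj c c') {D : ℝ}
    (hD : ∀ u, ∑ c ∈ L u, (H.degree c : ℝ) ≤ D) : (G.maxDegree : ℝ) ≤ D := by
  obtain ⟨w, hw⟩ := G.exists_maximal_degree_vertex
  rw [hw]
  exact le_trans (by exact_mod_cast degree_le_sum_degree G H hdisj hedge w) (hD w)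

variable [DecidableEq V] {p : ℝ}

theorem ex_pow_conflicts_le_exp {Λ : ℕ} (hdisj : Pairwise (Disjoint on L))
    (hL : ∀ x, #(L x) = Λ) (hΛ : 0 < Λ) (hp0 : 0 ≤ p) {r : ℝ} (hr : 1 ≤ r) (u : V) (c : W) :
    ex L p (fun ω => r ^ conflicts G H u c ω) ≤ Real.exp ((r - 1) * p * H.degree c / Λ) := by
  have hLne : ∀ x, (L x).Nonempty := fun x => card_pos.1 (hL x ▸ hΛ)
  have hr1 : 0 ≤ r - 1 := sub_nonneg.2 hr
  rw [ex_pow_conflicts G H hLne]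
  calc ∏ x ∈ G.neighborFinset u, (1 + (r - 1) * p * #{c' ∈ L x | H.Adj c c'} / #(L x))
      ≤ ∏ x ∈ G.neighborFinset u, Real.exp ((r - 1) * p * #{c' ∈ L x | H.Adj c c'} / Λ) :=
        prod_le_prod (fun x _ => by positivity)
          fun x _ => by rw [hL x, add_comm]; exact Real.add_one_le_exp _
    _ = Real.exp ((r - 1) * p * (∑ x ∈ G.neighborFinset u, #{c' ∈ L x | H.Adj c c'}) / Λ) := by
        rw [← Real.exp_sum, ← sum_div, ← mul_sum, Nat.cast_sum]
    _ ≤ Real.exp ((r - 1) * p * H.degree c / Λ) := by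
        gcongr
        exact sum_card_filter_adj_le_degree H hdisj _ c

theorem prE_conflicts_ge_le {Λ : ℕ} (hdisj : Pairwise (Disjoint on L))
    (hL : ∀ x, #(L x) = Λ) (hΛ : 0 < Λ) (hp0 : 0 ≤ p) (hp1 : p ≤ 1) {r : ℝ} (hr : 1 ≤ r)
    (u : V) (c : W) (s : ℝ) :
    prE L p (fun ω => s ≤ conflicts G H u c ω) ≤
      Real.exp ((r - 1) * p * H.degree c / Λ) * r ^ (-s) :=
  (prE_le_ex_pow_mul_rpow hp0 hp1 _ hr s).trans <|
    mul_le_mul_of_nonneg_right (ex_pow_conflicts_le_exp G H hdisj hL hΛ hp0 hr u c)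
      (Real.rpow_nonneg (by linarith) _)

theorem prE_conflicts_ge_sq_log_le {Λ : ℕ} {d : ℝ} (hd : 0 < d) (hlog : 1 ≤ Real.log d)
    (hdisj : Pairwise (Disjoint on L)) (hL : ∀ x, #(L x) = Λ) (hΛ : d ≤ Λ)
    (hp0 : 0 ≤ p) (hp : p ≤ 1 / Real.log d) (u : V) {c : W}
    (hc : (H.degree c : ℝ) ≤ d * Real.log d) :
    prE L p (fun ω => Real.log d ^ 2 ≤ conflicts G H u c ω) ≤
      d * Real.log d ^ (-(Real.log d ^ 2)) := by
  set lg := Real.log d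
  have hΛ0 : (0 : ℝ) < Λ := hd.trans_le hΛ
  have hp1 : p ≤ 1 := hp.trans ((div_le_one (by linarith)).2 hlog)
  refine (prE_conflicts_ge_le G H hdisj hL (by exact_mod_cast hΛ0) hp0 hp1 hlog u c _).trans
    (mul_le_mul_of_nonneg_right ?_ (by positivity))
  have hpdeg : p * H.degree c ≤ Λ :=
    calc p * H.degree c ≤ 1 / lg * (d * lg) := by gcongr
      _ = d := by field_simp
      _ ≤ Λ := hΛ
  calc Real.exp ((lg - 1) * p * H.degree c / Λ) ≤ Real.exp lg := by
        rw [Real.exp_le_exp, div_le_iff₀ hΛ0, mul_assoc]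
        nlinarith
    _ = d := Real.exp_log hd

end CoverGraph

theorem prE_exists_near_conflicts_ge_le {V W : Type} [Fintype V] [Fintype W] [DecidableEq V]
    (G : SimpleGraph V) (H : SimpleGraph W) {L : V → Finset W} {p : ℝ} (hp0 : 0 ≤ p)
    (hp1 : p ≤ 1) {Λ : ℕ} (hL : ∀ x, #(L x) = Λ) {s q : ℝ}
    (hq : ∀ u c, prE L p (fun ω => s ≤ conflicts G H u c ω) ≤ q) (v : V) :
    prE L p (fun ω => ∃ u, (u = v ∨ G.Adj v u ∨ ∃ x, G.Adj v x ∧ G.Adj x u) ∧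
        ∃ c ∈ L u, s ≤ conflicts G H u c ω) ≤
      (1 + G.maxDegree + G.maxDegree ^ 2) * (Λ * q) := by
  set B : Finset V := {u | u = v ∨ G.Adj v u ∨ ∃ x, G.Adj v x ∧ G.Adj x u}
  have hΛq : 0 ≤ Λ * q := by
    rcases (L v).eq_empty_or_nonempty with hv | ⟨c, -⟩
    · simp [← hL v, hv]
    · exact mul_nonneg (Nat.cast_nonneg _) ((prE_nonneg hp0 hp1 _).trans (hq v c))
  calc _ = prE L p (fun ω => ∃ u ∈ B, ∃ c ∈ L u, s ≤ conflicts G H u c ω) :=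
        prE_congr fun ω => by simp [B]
    _ ≤ ∑ u ∈ B, ∑ c ∈ L u, prE L p (fun ω => s ≤ conflicts G H u c ω) :=
        (prE_exists_le_sum hp0 hp1 _ _).trans
          (sum_le_sum fun u _ => prE_exists_le_sum hp0 hp1 _ _)
    _ ≤ ∑ u ∈ B, ∑ c ∈ L u, q := by gcongr with u _ c; exact hq u c
    _ = #B * (Λ * q) := by simp [hL]
    _ ≤ _ := by gcongr; exact_mod_cast card_ball_two_le G v

theorem pow_six_mul_rpow_neg_sq_log_le {d : ℝ} (hd : 0 < d) (hlog : 2 ≤ Real.log d) :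
    155 * d ^ 6 * Real.log d ^ (-(Real.log d ^ 2)) ≤
      16 * Real.exp 1 ^ 3 * d ^ 5 * (Real.exp 1 / Real.log d) ^ (Real.log d ^ 2 - 3) := by
  set lg := Real.log d
  have hlg : 0 < lg := by linarith
  have hd3 : 3 ≤ d := by linarith [Real.add_one_le_exp lg, Real.exp_log hd]
  have hsq : d ^ 2 ≤ Real.exp (lg ^ 2) :=
    calc d ^ 2 = Real.exp (2 * lg) := by
          rw [mul_comm, Real.exp_mul, Real.exp_log hd, Real.rpow_two]
      _ ≤ Real.exp (lg ^ 2) := by gcongr; nlinarith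
  have hrhs : 16 * Real.exp 1 ^ 3 * d ^ 5 * (Real.exp 1 / lg) ^ (lg ^ 2 - 3) =
      16 * d ^ 5 * (Real.exp (lg ^ 2) * lg ^ 3) * lg ^ (-(lg ^ 2)) := by
    rw [Real.div_rpow (Real.exp_pos 1).le hlg.le, Real.exp_one_rpow, Real.exp_sub,
      Real.exp_one_pow, Real.rpow_sub hlg, Real.rpow_neg hlg.le,
      show lg ^ (3 : ℝ) = lg ^ 3 by norm_cast]
    push_cast
    field_simp
  rw [hrhs]
  refine mul_le_mul_of_nonneg_right ?_ (by positivity)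
  calc 155 * d ^ 6 ≤ 16 * d ^ 5 * (d ^ 2 * 8) := by
        nlinarith [mul_le_mul_of_nonneg_right hd3 (pow_pos hd 6).le, pow_pos hd 6]
    _ ≤ 16 * d ^ 5 * (Real.exp (lg ^ 2) * lg ^ 3) := by gcongr; nlinarith

/-- Probability of the exceptional event `Ω*_v`: for `d` sufficiently large
(depending only on `ε`), the probability that some vertex `u` at `G`-distance at
most `2` from `v` has a colour `c ∈ L(u)` with `#conflicts_{u,c} ≥ (log d)²` is at
most `16·e³·d⁵·(e/log d)^{(log d)² − 3}`. -/
theorem exceptional_event_prob (ε : ℝ) (hε : 0 < ε) :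
    ∃ d₀ : ℝ, ∀ d : ℝ, d₀ ≤ d → 1 ≤ d →
      ∀ (V W : Type) [Fintype V] [Fintype W] [DecidableEq V] [DecidableEq W]
        (Λ : ℕ), (1 + ε) * d ≤ (Λ : ℝ) → (Λ : ℝ) ≤ 4 * d + 1 →
      ∀ (p : ℝ), 1 / (Real.log d) ^ 2 ≤ p → p ≤ 1 / Real.log d →
      ∀ (G : SimpleGraph V) (H : SimpleGraph W) [DecidableRel H.Adj]
        (L : V → Finset W),
        IsCoverGraph G H L →
        (∀ v : V, (L v).card = Λ) →
        (∀ v : V, ∑ c ∈ L v, (H.degree c : ℝ) ≤ d * Λ) →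
        (∀ c : W, (H.degree c : ℝ) ≤ d * Real.log d) →
        (∀ v v' : V, G.Adj v v' → ∀ c ∈ L v,
          (((L v').filter (fun c' => H.Adj c c')).card : ℝ) ≤ d ^ ((1 : ℝ) / 4)) →
        (∀ v v' : V, G.Adj v v' → ∃ c ∈ L v, ∃ c' ∈ L v', H.Adj c c') →
        ∀ v : V,
        prE L p (fun ω => ∃ u : V,
            (u = v ∨ G.Adj v u ∨ ∃ x : V, G.Adj v x ∧ G.Adj x u) ∧
            ∃ c ∈ L u, (Real.log d) ^ 2 ≤ (conflicts G H u c ω : ℝ))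
          ≤ 16 * Real.exp 1 ^ 3 * d ^ 5 *
              (Real.exp 1 / Real.log d) ^ ((Real.log d) ^ 2 - 3) := by
  refine ⟨Real.exp 2, fun d hd hd1 V W _ _ _ _ Λ hΛlow hΛhigh p hplow hphigh G H _ L hcover
    hLcard havg hmaxdeg _ hedge v => ?_⟩
  set lg := Real.log d
  have hd0 : 0 < d := by linarith
  have hlog : 2 ≤ lg := (Real.le_log_iff_exp_le hd0).2 hd
  have hΛ : d ≤ Λ := by nlinarith
  have hp0 : 0 ≤ p := le_trans (by positivity) hplow
  have hp1 : p ≤ 1 := hphigh.trans ((div_le_one (by linarith)).2 (by linarith))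
  have hΔ : (G.maxDegree : ℝ) ≤ 5 * d ^ 2 :=
    have : Nonempty V := ⟨v⟩
    maxDegree_le_of_sum_degree_le G H hcover.pairwise_disjoint hedge fun u =>
      (havg u).trans (by nlinarith)
  calc _ ≤ (1 + G.maxDegree + G.maxDegree ^ 2) * (Λ * (d * lg ^ (-(lg ^ 2)))) :=
        prE_exists_near_conflicts_ge_le G H hp0 hp1 hLcard (fun u c =>
          prE_conflicts_ge_sq_log_le G H hd0 (by linarith) hcover.pairwise_disjoint hLcard hΛ
            hp0 hphigh u (hmaxdeg c)) v
    _ ≤ (1 + 5 * d ^ 2 + (5 * d ^ 2) ^ 2) * (5 * d) * d * lg ^ (-(lg ^ 2)) := by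
        rw [← mul_assoc, ← mul_assoc]
        gcongr
        linarith
    _ ≤ 155 * d ^ 6 * lg ^ (-(lg ^ 2)) := by
        refine mul_le_mul_of_nonneg_right ?_ (by positivity)
        nlinarith [pow_le_pow_right₀ hd1 (show 2 ≤ 6 by norm_num),
          pow_le_pow_right₀ hd1 (show 4 ≤ 6 by norm_num)]
    _ ≤ _ := pow_six_mul_rpow_neg_sq_log_le hd0 hlog
end

section
/- There exists d₀ (depending only on ε) such that for all d ≥ d₀, in the setting of the wasteful random colouring procedure with activation probability p, every vertex v ∈ V(G) satisfies P[ |relevant_cols'_lost_deg_v − E[relevant_cols'_lost_deg_v]| > d^{11/6} ] ≤ exp(−d^{1/7}). -/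
open Finset
open scoped Classical

/-- `relevant_cols'_lost_deg_v`: the total `H`-degree of the relevant colours
(`deg_H(c) ≥ d/(log d)³`) of `L(v)` that are not `φ`-useable. -/
noncomputable def relLostDeg {V W : Type} [Fintype V] [Fintype W]
    (H : SimpleGraph W) [DecidableRel H.Adj] (L : V → Finset W) (d : ℝ) (v : V)
    (ω : Samp V W) : ℝ :=
  ∑ c ∈ (L v).filter (fun c => d / (Real.log d) ^ 3 ≤ (H.degree c : ℝ) ∧
      ¬ (∀ u : V, ω.1 u = true → ¬ H.Adj c (ω.2 u))), (H.degree c : ℝ)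

/-!
Under the wasteful procedure the pairs `(1[u ∈ A], ψ u)` are independent, and `relLostDeg` is a
function of them. Compared with leaving `u` inactive, activating `u` with colour `w` raises it by
at most `adjRelDeg w ≤ μ_L(H) Δ(H) ≤ d^{1/4} · d log d =: b`, and otherwise does not change it.
Hence the expected squared changes sum to at most
`(p / Λ) ∑_w adjRelDeg(w)² ≤ (p / Λ) b ∑_c deg(c)²` over relevant `c ∈ L v`, which is at most
`p log d · d² b ≤ d² b =: V`. A Bernstein-type bounded
differences inequality, proved by bounding the moment generating function along the martingale
that reveals one vertex at a time, gives the tail bound `2 exp(-(d^{11/6})² / 4V)`, and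
`(d^{11/6})² / 4V = d^{5/12} / (4 log d)` beats `d^{1/7} + log 2` once `d ≥ 2^84`.
-/

open Function Real

local notation "splitSamp" => Equiv.arrowProdEquivProdArrow _ (fun _ => Bool) (fun _ => _)

section ProductExpectation

variable {ι X : Type*} [Fintype X] [DecidableEq ι] {m : ι → X → ℝ}

/-- The conditional expectation of `f` under the product weights `m` given the coordinates of `ω`
outside `l`, computed one coordinate at a time. -/
noncomputable def iterExpect (m : ι → X → ℝ) : List ι → ((ι → X) → ℝ) → (ι → X) → ℝ
  | [], f => f
  | i :: l, f => fun ω => ∑ x, m i x * iterExpect m l f (update ω i x)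

theorem abs_iterExpect_update_sub_le (hm0 : ∀ i x, 0 ≤ m i x) (hm1 : ∀ i, ∑ x, m i x = 1)
    {l : List ι} {i : ι} (hi : i ∉ l) {f : (ι → X) → ℝ} {x y : X} {C : ℝ}
    (hC : ∀ σ, |f (update σ i x) - f (update σ i y)| ≤ C) (ω : ι → X) :
    |iterExpect m l f (update ω i x) - iterExpect m l f (update ω i y)| ≤ C := by
  induction l generalizing ω with
  | nil => exact hC ω
  | cons j l ih =>
    have hij : i ≠ j := fun h => hi (h ▸ List.mem_cons_self)
    simp only [iterExpect, ← sum_sub_distrib, ← mul_sub]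
    calc _ ≤ ∑ z, |m j z * (iterExpect m l f (update (update ω i x) j z)
              - iterExpect m l f (update (update ω i y) j z))| := abs_sum_le_sum_abs _ _
      _ ≤ ∑ z, m j z * C := by
        refine sum_le_sum fun z _ => ?_
        rw [abs_mul, abs_of_nonneg (hm0 j z), update_comm hij, update_comm hij]
        exact mul_le_mul_of_nonneg_left (ih (fun h => hi (List.mem_cons_of_mem _ h)) _) (hm0 j z)
      _ = C := by rw [← sum_mul, hm1, one_mul]

variable [Fintype ι]

noncomputable def piExpect (m : ι → X → ℝ) (f : (ι → X) → ℝ) : ℝ :=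
  ∑ σ : ι → X, (∏ i, m i (σ i)) * f σ

theorem piExpect_mono (hm0 : ∀ i x, 0 ≤ m i x) {f g : (ι → X) → ℝ} (h : ∀ σ, f σ ≤ g σ) :
    piExpect m f ≤ piExpect m g :=
  sum_le_sum fun σ _ => mul_le_mul_of_nonneg_left (h σ) (prod_nonneg fun i _ => hm0 i (σ i))

theorem piExpect_add (f g : (ι → X) → ℝ) :
    piExpect m (fun σ => f σ + g σ) = piExpect m f + piExpect m g := by
  simp only [piExpect, mul_add, sum_add_distrib]

theorem piExpect_const_mul (c : ℝ) (f : (ι → X) → ℝ) :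
    piExpect m (fun σ => c * f σ) = c * piExpect m f := by
  simp only [piExpect, mul_sum]
  exact sum_congr rfl fun σ _ => by ring

theorem piExpect_neg (f : (ι → X) → ℝ) : piExpect m (fun σ => -f σ) = -piExpect m f := by
  simp only [piExpect, mul_neg, sum_neg_distrib]

theorem iterExpect_eq_sum_prod {l : List ι} (hl : l.Nodup) (f : (ι → X) → ℝ) (ω : ι → X) :
    iterExpect m l f ω =
      ∑ σ : ι → X, (∏ i, if i ∈ l then m i (σ i) else if σ i = ω i then 1 else 0) * f σ := by
  induction l generalizing ω with
  | nil =>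
    simp only [iterExpect, List.not_mem_nil, if_false, Fintype.prod_boole, ← funext_iff]
    simp
  | cons i l ih =>
    obtain ⟨hi, hl⟩ := List.nodup_cons.1 hl
    have hprod : ∀ (σ : ι → X) (x : X),
        (∏ j, if j ∈ l then m j (σ j) else if σ j = update ω i x j then 1 else 0) =
          (if σ i = x then 1 else 0) *
            ∏ j ∈ univ.erase i, if j ∈ i :: l then m j (σ j) else if σ j = ω j then 1 else 0 := by
      intro σ x
      rw [← mul_prod_erase univ _ (mem_univ i)]
      congr 1
      · simp [hi]
      · refine prod_congr rfl fun j hj => ?_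
        have hji := ne_of_mem_erase hj
        simp [hji]
    simp only [iterExpect, ih hl, mul_sum]
    rw [sum_comm]
    refine sum_congr rfl fun σ _ => ?_
    simp only [hprod, ← mul_assoc, mul_ite, mul_one, mul_zero, ite_mul, zero_mul, sum_ite_eq]
    rw [← mul_prod_erase univ _ (mem_univ i)]
    simp

theorem iterExpect_eq_piExpect {l : List ι} (hl : l.Nodup) (hmem : ∀ i, i ∈ l)
    (f : (ι → X) → ℝ) (ω : ι → X) : iterExpect m l f ω = piExpect m f := by
  simp [iterExpect_eq_sum_prod hl, hmem, piExpect]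

end ProductExpectation

section ProbabilityVector

variable {X : Type*} [Fintype X] {q : X → ℝ}

theorem exp_le_one_add_add_sq {y : ℝ} (hy : |y| ≤ 1) : exp y ≤ 1 + y + y ^ 2 := by
  have := (abs_le.1 (abs_exp_sub_one_sub_id_le hy)).2
  linarith

theorem abs_sub_sum_mul_le (hq0 : ∀ x, 0 ≤ q x) (hq1 : ∑ x, q x = 1) {φ : X → ℝ} {a B : ℝ}
    (h : ∀ y, |a - φ y| ≤ B) : |a - ∑ y, q y * φ y| ≤ B := by
  have : a - ∑ y, q y * φ y = ∑ y, q y * (a - φ y) := by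
    simp only [mul_sub, sum_sub_distrib, ← sum_mul, hq1, one_mul]
  rw [this]
  calc _ ≤ ∑ y, |q y * (a - φ y)| := abs_sum_le_sum_abs _ _
    _ ≤ ∑ y, q y * B := sum_le_sum fun y _ => by
        rw [abs_mul, abs_of_nonneg (hq0 y)]; exact mul_le_mul_of_nonneg_left (h y) (hq0 y)
    _ = B := by rw [← sum_mul, hq1, one_mul]

theorem sum_mul_sq_sub_mean_le (hq1 : ∑ x, q x = 1) (φ : X → ℝ) (c : ℝ) :
    ∑ x, q x * (φ x - ∑ y, q y * φ y) ^ 2 ≤ ∑ x, q x * (φ x - c) ^ 2 := by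
  set μ := ∑ y, q y * φ y
  have h : ∀ x, q x * (φ x - c) ^ 2 - q x * (φ x - μ) ^ 2
      = (μ - c) * (2 * (q x * φ x) - (μ + c) * q x) := fun x => by ring
  rw [← sub_nonneg, ← sum_sub_distrib]
  simp only [h, ← mul_sum, sum_sub_distrib, hq1]
  nlinarith [sq_nonneg (μ - c)]

/-- `|t (φ x - mean)| ≤ 2 t b ≤ 1`, so `exp y ≤ 1 + y + y ^ 2` reduces the bound to the variance
of `φ`, which is at most `∑ q g ^ 2`. -/
theorem sum_mul_exp_le (hq0 : ∀ x, 0 ≤ q x) (hq1 : ∑ x, q x = 1) {φ g : X → ℝ} {x₀ : X}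
    {b t : ℝ} (hφ : ∀ x, |φ x - φ x₀| ≤ g x) (hgb : ∀ x, g x ≤ b) (ht : 0 ≤ t)
    (htb : 2 * t * b ≤ 1) :
    ∑ x, q x * exp (t * φ x) ≤
      exp (t * ∑ x, q x * φ x + t ^ 2 * ∑ x, q x * g x ^ 2) := by
  set μ := ∑ x, q x * φ x
  have hdev : ∀ x, |t * (φ x - μ)| ≤ 1 := fun x => by
    have : |φ x - μ| ≤ 2 * b := abs_sub_sum_mul_le hq0 hq1 fun y => by
      calc |φ x - φ y| ≤ |φ x - φ x₀| + |φ x₀ - φ y| := abs_sub_le _ _ _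
        _ ≤ 2 * b := by linarith [hφ x, abs_sub_comm (φ x₀) (φ y) ▸ hφ y, hgb x, hgb y]
    rw [abs_mul, abs_of_nonneg ht]
    nlinarith
  have hvar : ∑ x, q x * (φ x - μ) ^ 2 ≤ ∑ x, q x * g x ^ 2 :=
    (sum_mul_sq_sub_mean_le hq1 φ (φ x₀)).trans <| sum_le_sum fun x _ =>
      mul_le_mul_of_nonneg_left (sq_le_sq' (abs_le.1 (hφ x)).1 (abs_le.1 (hφ x)).2) (hq0 x)
  have hexpand : ∀ x, q x * (1 + t * (φ x - μ) + (t * (φ x - μ)) ^ 2)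
      = q x + t * (q x * φ x) - t * μ * q x + t ^ 2 * (q x * (φ x - μ) ^ 2) := fun x => by ring
  calc ∑ x, q x * exp (t * φ x) = exp (t * μ) * ∑ x, q x * exp (t * (φ x - μ)) := by
        rw [mul_sum]
        refine sum_congr rfl fun x _ => ?_
        rw [mul_left_comm, ← exp_add]
        ring_nf
    _ ≤ exp (t * μ) * ∑ x, q x * (1 + t * (φ x - μ) + (t * (φ x - μ)) ^ 2) :=
        mul_le_mul_of_nonneg_left (sum_le_sum fun x _ =>
          mul_le_mul_of_nonneg_left (exp_le_one_add_add_sq (hdev x)) (hq0 x)) (exp_nonneg _)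
    _ = exp (t * μ) * (1 + t ^ 2 * ∑ x, q x * (φ x - μ) ^ 2) := by
        simp only [hexpand, sum_add_distrib, sum_sub_distrib, ← mul_sum, hq1]
        ring
    _ ≤ exp (t * μ) * exp (t ^ 2 * ∑ x, q x * g x ^ 2) := by
        gcongr
        linarith [add_one_le_exp (t ^ 2 * ∑ x, q x * g x ^ 2),
          mul_le_mul_of_nonneg_left hvar (sq_nonneg t)]
    _ = _ := (exp_add _ _).symm

end ProbabilityVector

section BoundedDifferences

variable {ι X : Type*} [Fintype X] [DecidableEq ι] {m : ι → X → ℝ} {f : (ι → X) → ℝ}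
  {g : ι → X → ℝ} {b : ℝ}

theorem iterExpect_exp_le (hm0 : ∀ i x, 0 ≤ m i x) (hm1 : ∀ i, ∑ x, m i x = 1)
    (x₀ : ι → X) (hf : ∀ i σ x, |f (update σ i x) - f (update σ i (x₀ i))| ≤ g i x)
    (hgb : ∀ i x, g i x ≤ b) {t : ℝ} (ht : 0 ≤ t) (htb : 2 * t * b ≤ 1)
    {l : List ι} (hl : l.Nodup) (ω : ι → X) :
    iterExpect m l (fun σ => exp (t * f σ)) ω ≤
      exp (t * iterExpect m l f ω + t ^ 2 * (l.map fun i => ∑ x, m i x * g i x ^ 2).sum) := by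
  induction l generalizing ω with
  | nil => simp [iterExpect]
  | cons i l ih =>
    obtain ⟨hi, hl⟩ := List.nodup_cons.1 hl
    set S := (l.map fun i => ∑ x, m i x * g i x ^ 2).sum
    have hφ : ∀ x, |iterExpect m l f (update ω i x) - iterExpect m l f (update ω i (x₀ i))|
        ≤ g i x := fun x => abs_iterExpect_update_sub_le hm0 hm1 hi (fun σ => hf i σ x) ω
    calc iterExpect m (i :: l) (fun σ => exp (t * f σ)) ω
        = ∑ x, m i x * iterExpect m l (fun σ => exp (t * f σ)) (update ω i x) := rfl
      _ ≤ ∑ x, m i x * exp (t * iterExpect m l f (update ω i x) + t ^ 2 * S) :=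
        sum_le_sum fun x _ => mul_le_mul_of_nonneg_left (ih hl _) (hm0 i x)
      _ = exp (t ^ 2 * S) * ∑ x, m i x * exp (t * iterExpect m l f (update ω i x)) := by
        rw [mul_sum]
        exact sum_congr rfl fun x _ => by rw [exp_add]; ring
      _ ≤ exp (t ^ 2 * S) * exp (t * ∑ x, m i x * iterExpect m l f (update ω i x)
            + t ^ 2 * ∑ x, m i x * g i x ^ 2) :=
        mul_le_mul_of_nonneg_left (sum_mul_exp_le (hm0 i) (hm1 i) hφ (hgb i) ht htb)
          (exp_nonneg _)
      _ = _ := by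
        rw [← exp_add, List.map_cons, List.sum_cons]
        simp only [iterExpect, S]
        congr 1
        ring

variable [Fintype ι]

theorem piExpect_exp_le (hm0 : ∀ i x, 0 ≤ m i x) (hm1 : ∀ i, ∑ x, m i x = 1)
    (x₀ : ι → X) (hf : ∀ i σ x, |f (update σ i x) - f (update σ i (x₀ i))| ≤ g i x)
    (hgb : ∀ i x, g i x ≤ b) {t : ℝ} (ht : 0 ≤ t) (htb : 2 * t * b ≤ 1) :
    piExpect m (fun σ => exp (t * f σ)) ≤
      exp (t * piExpect m f + t ^ 2 * ∑ i, ∑ x, m i x * g i x ^ 2) := by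
  have hl := nodup_toList (univ : Finset ι)
  have hmem : ∀ i, i ∈ (univ : Finset ι).toList := fun i => mem_toList.2 (mem_univ i)
  have := iterExpect_exp_le hm0 hm1 x₀ hf hgb ht htb hl x₀
  rwa [iterExpect_eq_piExpect hl hmem, iterExpect_eq_piExpect hl hmem, sum_map_toList] at this

theorem piExpect_exp_sub_sub_le (hm0 : ∀ i x, 0 ≤ m i x) (hm1 : ∀ i, ∑ x, m i x = 1)
    (x₀ : ι → X) (hf : ∀ i σ x, |f (update σ i x) - f (update σ i (x₀ i))| ≤ g i x)
    (hgb : ∀ i x, g i x ≤ b) {t V : ℝ} (ht : 0 ≤ t) (htb : 2 * t * b ≤ 1)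
    (hV : ∑ i, ∑ x, m i x * g i x ^ 2 ≤ V) (lam : ℝ) :
    piExpect m (fun σ => exp (t * (f σ - piExpect m f - lam))) ≤ exp (-(t * lam) + t ^ 2 * V) := by
  have hsplit : ∀ σ, exp (t * (f σ - piExpect m f - lam))
      = exp (-(t * (piExpect m f + lam))) * exp (t * f σ) := fun σ => by
    rw [← exp_add]; ring_nf
  simp only [hsplit, piExpect_const_mul]
  calc _ ≤ exp (-(t * (piExpect m f + lam))) *
        exp (t * piExpect m f + t ^ 2 * ∑ i, ∑ x, m i x * g i x ^ 2) :=
        mul_le_mul_of_nonneg_left (piExpect_exp_le hm0 hm1 x₀ hf hgb ht htb) (exp_nonneg _)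
    _ ≤ exp (-(t * (piExpect m f + lam))) * exp (t * piExpect m f + t ^ 2 * V) := by gcongr
    _ = exp (-(t * lam) + t ^ 2 * V) := by rw [← exp_add]; ring_nf

/-- Chernoff's bound with `t = lam / (2 V)`, applied to `f` and to `-f`. -/
theorem piExpect_indicator_lt_abs_sub_le (hm0 : ∀ i x, 0 ≤ m i x) (hm1 : ∀ i, ∑ x, m i x = 1)
    (x₀ : ι → X) (hf : ∀ i σ x, |f (update σ i x) - f (update σ i (x₀ i))| ≤ g i x)
    (hgb : ∀ i x, g i x ≤ b) {V lam : ℝ} (hV : ∑ i, ∑ x, m i x * g i x ^ 2 ≤ V)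
    (hlam : 0 ≤ lam) (hlamb : lam * b ≤ V) :
    piExpect m (fun σ => if lam < |f σ - piExpect m f| then 1 else 0) ≤
      2 * exp (-(lam ^ 2 / (4 * V))) := by
  have hV0 : 0 ≤ V := (sum_nonneg fun i _ => sum_nonneg fun x _ =>
    mul_nonneg (hm0 i x) (sq_nonneg _)).trans hV
  set t := lam / (2 * V)
  have ht : 0 ≤ t := by positivity
  have htb : 2 * t * b ≤ 1 := by
    rcases hV0.eq_or_lt with hV0 | hV0
    · simp [t, ← hV0]
    · rw [show 2 * t * b = lam * b / V by simp only [t]; field_simp]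
      exact div_le_one_of_le₀ hlamb hV0.le
  have hexponent : -(t * lam) + t ^ 2 * V = -(lam ^ 2 / (4 * V)) := by
    rcases hV0.eq_or_lt with hV0 | hV0
    · simp [t, ← hV0]
    · simp only [t]; field_simp; ring_nf
  have hf_neg : ∀ i σ x, |-f (update σ i x) - -f (update σ i (x₀ i))| ≤ g i x :=
    fun i σ x => by rw [← abs_neg]; convert hf i σ x using 2; ring
  have hind : ∀ σ, (if lam < |f σ - piExpect m f| then 1 else 0) ≤
      exp (t * (f σ - piExpect m f - lam)) + exp (t * (-f σ - -piExpect m f - lam)) := by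
    intro σ
    split_ifs with h
    · rcases lt_abs.1 h with h | h
      · linarith [one_le_exp (mul_nonneg ht (by linarith : 0 ≤ f σ - piExpect m f - lam)),
          exp_nonneg (t * (-f σ - -piExpect m f - lam))]
      · linarith [one_le_exp (mul_nonneg ht (by linarith : 0 ≤ -f σ - -piExpect m f - lam)),
          exp_nonneg (t * (f σ - piExpect m f - lam))]
    · positivity
  have hupper := piExpect_exp_sub_sub_le hm0 hm1 x₀ hf hgb ht htb hV lam
  have hlower := piExpect_exp_sub_sub_le (f := fun σ => -f σ) hm0 hm1 x₀ hf_neg hgb ht htb hV lam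
  rw [piExpect_neg] at hlower
  rw [hexponent] at hupper hlower
  calc _ ≤ _ := piExpect_mono hm0 hind
    _ = _ := piExpect_add _ _
    _ ≤ 2 * exp (-(lam ^ 2 / (4 * V))) := by linarith

end BoundedDifferences

theorem two_mul_exp_neg_le_exp_neg_rpow {d : ℝ} (hd : 2 ^ 84 ≤ d) :
    2 * exp (-((d ^ (11 / 6 : ℝ)) ^ 2 / (4 * (d ^ 2 * (d ^ (1 / 4 : ℝ) * (d * log d)))))) ≤
      exp (-d ^ (1 / 7 : ℝ)) := by
  have hd0 : 0 ≤ d := le_trans (by positivity) hd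
  -- every exponent is a multiple of `1 / 84`
  set s := d ^ (1 / 84 : ℝ)
  have hpow : ∀ k : ℕ, d ^ ((k : ℝ) / 84) = s ^ k := fun k => by
    rw [← rpow_natCast, ← rpow_mul hd0]; ring_nf
  have hds : d = s ^ 84 := by rw [← hpow 84]; norm_num
  have hs : 2 ≤ s := calc
    (2 : ℝ) = ((2 : ℝ) ^ 84) ^ (1 / 84 : ℝ) := by rw [← rpow_natCast, ← rpow_mul] <;> norm_num
    _ ≤ s := rpow_le_rpow (by positivity) hd (by norm_num)
  have hlog : 0 < log s ∧ log s ≤ s :=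
    ⟨log_pos (by linarith), (log_le_sub_one_of_pos (by linarith)).trans (by linarith)⟩
  rw [show (11 / 6 : ℝ) = (154 : ℕ) / 84 by norm_num, show (1 / 4 : ℝ) = (21 : ℕ) / 84 by norm_num,
    show (1 / 7 : ℝ) = (12 : ℕ) / 84 by norm_num, hpow, hpow, hpow, hds, log_pow, Nat.cast_ofNat]
  have hexponent : (s ^ 154) ^ 2 / (4 * ((s ^ 84) ^ 2 * (s ^ 21 * (s ^ 84 * (84 * log s)))))
      = s ^ 35 / (336 * log s) := by
    field_simp
    ring
  have hmargin : s ^ 12 + log 2 ≤ s ^ 35 / (336 * log s) := by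
    rw [le_div_iff₀ (by linarith)]
    have hs12 : 1 ≤ s ^ 12 := one_le_pow₀ (by linarith)
    have hs22 : (2 : ℝ) ^ 22 ≤ s ^ 22 := pow_le_pow_left₀ (by norm_num) hs 22
    have hs13 : 0 ≤ s ^ 13 := by positivity
    calc (s ^ 12 + log 2) * (336 * log s) ≤ (2 * s ^ 12) * (336 * s) :=
          mul_le_mul (by linarith [log_two_lt_d9]) (by linarith) (by linarith) (by positivity)
      _ = 672 * s ^ 13 := by ring
      _ ≤ s ^ 22 * s ^ 13 := by nlinarith
      _ = s ^ 35 := by ring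
  rw [hexponent, ← exp_log (show (0 : ℝ) < 2 by norm_num), ← exp_add, exp_le_exp]
  linarith

theorem abs_sum_filter_exists_update_sub_le {ι X C : Type*} [DecidableEq ι] (R : Finset C)
    {a : C → ℝ} (ha : ∀ c ∈ R, 0 ≤ a c) (P : X → C → Prop) (σ : ι → X) (i : ι) {x y : X}
    (hy : ∀ c, ¬ P y c) :
    |∑ c ∈ R with ∃ j, P (update σ i x j) c, a c - ∑ c ∈ R with ∃ j, P (update σ i y j) c, a c|
      ≤ ∑ c ∈ R with P x c, a c := by
  have hupd : ∀ z c, (∃ j, P (update σ i z j) c) ↔ P z c ∨ ∃ j ≠ i, P (σ j) c :=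
    fun z c => exists_update_iff σ fun _ z' => P z' c
  simp only [sum_filter, ← sum_sub_distrib, hupd, hy, false_or]
  rw [abs_of_nonneg (sum_nonneg fun c hc => by split_ifs <;> simp_all)]
  exact sum_le_sum fun c hc => by split_ifs <;> simp_all

section WastefulColouring

variable {V W : Type} {L : V → Finset W} {p : ℝ}

/-- The law of `(1[u ∈ A], ψ u)` for a single vertex `u`. -/
noncomputable def vertexWt (L : V → Finset W) (p : ℝ) (u : V) (x : Bool × W) : ℝ :=
  (if x.1 then p else 1 - p) * if x.2 ∈ L u then 1 / ((L u).card : ℝ) else 0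

theorem vertexWt_nonneg (hp0 : 0 ≤ p) (hp1 : p ≤ 1) (u : V) (x : Bool × W) :
    0 ≤ vertexWt L p u x :=
  mul_nonneg (by split_ifs <;> linarith) (by split_ifs <;> positivity)

theorem wt_arrowProdEquivProdArrow [Fintype V] (σ : V → Bool × W) :
    wt L p (splitSamp σ) = ∏ u, vertexWt L p u (σ u) :=
  prod_mul_distrib.symm

variable [Fintype W]

theorem sum_vertexWt_mul (u : V) (h : W → ℝ) :
    ∑ x, vertexWt L p u x * (if x.1 then h x.2 else 0) = p / (L u).card * ∑ w ∈ L u, h w := by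
  rw [Fintype.sum_prod_type, Fintype.sum_bool]
  simp [vertexWt, mul_sum, div_eq_mul_inv]

theorem sum_vertexWt {u : V} (hL : (L u).Nonempty) : ∑ x, vertexWt L p u x = 1 := by
  have hcard : ((L u).card : ℝ) ≠ 0 := by exact_mod_cast hL.card_pos.ne'
  simp only [vertexWt, Fintype.sum_prod_type, Fintype.sum_bool, ← mul_sum, sum_ite_mem,
    univ_inter, sum_const, nsmul_eq_mul, mul_one_div_cancel hcard]
  simp [mul_left_comm _ (1 - p), mul_inv_cancel₀ hcard]

variable [Fintype V] [DecidableEq V]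

theorem prE_eq_piExpect (E : Samp V W → Prop) [DecidablePred E] :
    prE L p E = piExpect (vertexWt L p) fun σ => if E (splitSamp σ) then 1 else 0 := by
  rw [prE, piExpect, ← (splitSamp).sum_comp]
  refine sum_congr rfl fun σ _ => ?_
  rw [wt_arrowProdEquivProdArrow]
  split_ifs <;> simp

theorem ex_eq_piExpect (Y : Samp V W → ℝ) :
    ex L p Y = piExpect (vertexWt L p) fun σ => Y (splitSamp σ) := by
  rw [ex, piExpect, ← (splitSamp).sum_comp]
  simp only [wt_arrowProdEquivProdArrow]

end WastefulColouring

section CoverGraph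

variable {V W : Type} {G : SimpleGraph V} {H : SimpleGraph W} {L : V → Finset W}

theorem IsCoverGraph.sum_sum_eq [Fintype V] [Fintype W] (hL : IsCoverGraph G H L) (h : W → ℝ) :
    ∑ u, ∑ w ∈ L u, h w = ∑ w, h w := by
  rw [← sum_biUnion fun u _ u' _ hne => hL.1 u u' hne]
  congr
  ext w
  simpa using hL.2.1 w

theorem IsCoverGraph.card_filter_adj_le [DecidableRel H.Adj] (hL : IsCoverGraph G H L) {μ : ℝ}
    (hμ0 : 0 ≤ μ)
    (hμ : ∀ v v', G.Adj v v' → ∀ c ∈ L v, (((L v').filter fun c' => H.Adj c c').card : ℝ) ≤ μ)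
    (v : V) (w : W) : (((L v).filter fun c => H.Adj w c).card : ℝ) ≤ μ := by
  obtain ⟨u, hu⟩ := hL.2.1 w
  by_cases huv : G.Adj u v
  · exact hμ u v huv w hu
  · have : (L v).filter (fun c => H.Adj w c) = ∅ :=
      filter_eq_empty_iff.2 fun c hc hwc => hL.2.2 u v huv w hu c hc hwc
    simpa [this] using hμ0

theorem sum_sum_filter_adj [Fintype W] [DecidableRel H.Adj] (R : Finset W) (h : W → ℝ) :
    ∑ w, ∑ c ∈ R with H.Adj c w, h c = ∑ c ∈ R, (H.degree c : ℝ) * h c := by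
  simp_rw [sum_filter]
  rw [sum_comm]
  refine sum_congr rfl fun c _ => ?_
  rw [← sum_filter, sum_const, nsmul_eq_mul, ← SimpleGraph.card_neighborFinset_eq_degree,
    SimpleGraph.neighborFinset_eq_filter]

end CoverGraph

section RelevantColours

variable {V W : Type} [Fintype W] {G : SimpleGraph V} {H : SimpleGraph W}
  [DecidableRel H.Adj] {L : V → Finset W} {d : ℝ} {v : V}

noncomputable def relCols (H : SimpleGraph W) [DecidableRel H.Adj] (L : V → Finset W) (d : ℝ)
    (v : V) : Finset W :=
  (L v).filter fun c => d / log d ^ 3 ≤ (H.degree c : ℝ)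

noncomputable def adjRelDeg (H : SimpleGraph W) [DecidableRel H.Adj] (L : V → Finset W) (d : ℝ)
    (v : V) (w : W) : ℝ :=
  ∑ c ∈ relCols H L d v with H.Adj c w, (H.degree c : ℝ)

theorem adjRelDeg_le (hL : IsCoverGraph G H L) {μ : ℝ} (hμ0 : 0 ≤ μ)
    (hμ : ∀ v v', G.Adj v v' → ∀ c ∈ L v, (((L v').filter fun c' => H.Adj c c').card : ℝ) ≤ μ)
    {D : ℝ} (hD0 : 0 ≤ D) (hdeg : ∀ c, (H.degree c : ℝ) ≤ D) (w : W) :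
    adjRelDeg H L d v w ≤ μ * D := by
  have hsub : (relCols H L d v).filter (fun c => H.Adj c w) ⊆ (L v).filter fun c => H.Adj w c :=
    fun c hc => by
      simp only [relCols, mem_filter] at hc ⊢
      exact ⟨hc.1.1, hc.2.symm⟩
  calc adjRelDeg H L d v w ≤ ((relCols H L d v).filter fun c => H.Adj c w).card • D :=
        sum_le_card_nsmul _ _ _ fun c _ => hdeg c
    _ ≤ (((L v).filter fun c => H.Adj w c).card : ℝ) * D := by
        rw [nsmul_eq_mul]; gcongr
    _ ≤ μ * D := by gcongr; exact hL.card_filter_adj_le hμ0 hμ v w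

variable [Fintype V]

theorem relLostDeg_arrowProdEquivProdArrow (σ : V → Bool × W) :
    relLostDeg H L d v (splitSamp σ) =
      ∑ c ∈ relCols H L d v with ∃ u, (σ u).1 = true ∧ H.Adj c (σ u).2, (H.degree c : ℝ) := by
  rw [relLostDeg, relCols, filter_filter]
  refine sum_congr (filter_congr fun c _ => ?_) fun _ _ => rfl
  simp [Equiv.arrowProdEquivProdArrow]

theorem relLostDeg_update_sub_le [DecidableEq V] (σ : V → Bool × W) (u : V) (x : Bool × W)
    (w₀ : W) :
    |relLostDeg H L d v (splitSamp (update σ u x))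
        - relLostDeg H L d v (splitSamp (update σ u (false, w₀)))|
      ≤ if x.1 then adjRelDeg H L d v x.2 else 0 := by
  have := abs_sum_filter_exists_update_sub_le (relCols H L d v)
    (fun c _ => Nat.cast_nonneg (H.degree c)) (fun x c => x.1 = true ∧ H.Adj c x.2) σ u
    (x := x) (y := (false, w₀)) (by simp)
  rw [relLostDeg_arrowProdEquivProdArrow, relLostDeg_arrowProdEquivProdArrow]
  convert this using 5
  obtain ⟨_ | _, w⟩ := x <;> simp [adjRelDeg]

theorem sum_vertexWt_mul_adjRelDeg_sq_le (hL : IsCoverGraph G H L) {Λ : ℕ} (hΛ : 0 < Λ)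
    (hcard : ∀ u, (L u).card = Λ) {p : ℝ} (hp0 : 0 ≤ p)
    (havg : ∑ c ∈ L v, (H.degree c : ℝ) ≤ d * Λ) {B D : ℝ}
    (hB : ∀ w, adjRelDeg H L d v w ≤ B) (hdeg : ∀ c, (H.degree c : ℝ) ≤ D) :
    ∑ u, ∑ x, vertexWt L p u x * (if x.1 then adjRelDeg H L d v x.2 else 0) ^ 2 ≤
      p * B * D * d := by
  have hcw0 : ∀ w, 0 ≤ adjRelDeg H L d v w := fun w => sum_nonneg fun c _ => Nat.cast_nonneg _
  obtain ⟨w₀, -⟩ : (L v).Nonempty := card_pos.1 (hcard v ▸ hΛ)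
  have hB0 : 0 ≤ B := (hcw0 w₀).trans (hB w₀)
  have hD0 : 0 ≤ D := (Nat.cast_nonneg _).trans (hdeg w₀)
  have hΛ' : (0 : ℝ) < Λ := by exact_mod_cast hΛ
  have hdeg_sq : ∑ c ∈ relCols H L d v, (H.degree c : ℝ) * H.degree c ≤ D * (d * Λ) := calc
    _ ≤ ∑ c ∈ relCols H L d v, D * H.degree c :=
        sum_le_sum fun c _ => mul_le_mul_of_nonneg_right (hdeg c) (Nat.cast_nonneg _)
    _ ≤ ∑ c ∈ L v, D * H.degree c :=
        sum_le_sum_of_subset_of_nonneg (filter_subset _ _) fun c _ _ => by positivity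
    _ ≤ D * (d * Λ) := by rw [← mul_sum]; gcongr
  have hvertex : ∀ u, ∑ x, vertexWt L p u x * (if x.1 then adjRelDeg H L d v x.2 else 0) ^ 2
      = p / Λ * ∑ w ∈ L u, adjRelDeg H L d v w ^ 2 := fun u => by
    rw [← hcard u, ← sum_vertexWt_mul]
    exact sum_congr rfl fun x _ => by split_ifs <;> simp
  calc _ = p / Λ * ∑ w, adjRelDeg H L d v w ^ 2 := by
        simp only [hvertex, ← mul_sum, hL.sum_sum_eq]
    _ ≤ p / Λ * (B * ∑ w, adjRelDeg H L d v w) := by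
        gcongr
        rw [mul_sum]
        gcongr with w
        nlinarith [hcw0 w, hB w]
    _ = p / Λ * (B * ∑ c ∈ relCols H L d v, (H.degree c : ℝ) * H.degree c) := by
        simp only [adjRelDeg, sum_sum_filter_adj]
    _ ≤ p / Λ * (B * (D * (d * Λ))) := by gcongr
    _ = p * B * D * d := by field_simp

end RelevantColours

/-- Concentration of the lost degree of relevant colours: for `d` sufficiently
large (depending only on `ε`),
`P[|relevant_cols'_lost_deg_v − E[…]| > d^{11/6}] ≤ exp(−d^{1/7})`. -/
theorem relevant_lost_deg_concentration (ε : ℝ) (hε : 0 < ε) :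
    ∃ d₀ : ℝ, ∀ d : ℝ, d₀ ≤ d → 1 ≤ d →
      ∀ (V W : Type) [Fintype V] [Fintype W] [DecidableEq V] [DecidableEq W]
        (Λ : ℕ), (1 + ε) * d ≤ (Λ : ℝ) → (Λ : ℝ) ≤ 4 * d + 1 →
      ∀ (p : ℝ), 1 / (Real.log d) ^ 2 ≤ p → p ≤ 1 / Real.log d →
      ∀ (G : SimpleGraph V) (H : SimpleGraph W) [DecidableRel H.Adj]
        (L : V → Finset W),
        IsCoverGraph G H L →
        (∀ v : V, (L v).card = Λ) →
        (∀ v : V, ∑ c ∈ L v, (H.degree c : ℝ) ≤ d * Λ) →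
        (∀ c : W, (H.degree c : ℝ) ≤ d * Real.log d) →
        (∀ v v' : V, G.Adj v v' → ∀ c ∈ L v,
          (((L v').filter (fun c' => H.Adj c c')).card : ℝ) ≤ d ^ ((1 : ℝ) / 4)) →
        (∀ v v' : V, G.Adj v v' → ∃ c ∈ L v, ∃ c' ∈ L v', H.Adj c c') →
        ∀ v : V,
        prE L p (fun ω => d ^ ((11 : ℝ) / 6) <
            |relLostDeg H L d v ω - ex L p (relLostDeg H L d v)|)
          ≤ Real.exp (-(d ^ ((1 : ℝ) / 7))) := by
  refine ⟨2 ^ 84, fun d hd hd1 V W _ _ _ _ Λ hΛ _ p hpl hpu G H _ L hL hcard havg hdeg hμ _ v => ?_⟩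
  have hlog : 1 ≤ log d := (le_log_iff_exp_le (by positivity)).2 <|
    exp_one_lt_d9.le.trans (le_trans (by norm_num) hd)
  have hp0 : 0 ≤ p := le_trans (by positivity) hpl
  have hplog : p * log d ≤ 1 := (le_div_iff₀ (by positivity)).1 hpu
  have hL0 : ∀ u, (L u).Nonempty := fun u => card_pos.1 <| hcard u ▸ by
    exact_mod_cast (by positivity : (0 : ℝ) < (1 + ε) * d).trans_le hΛ
  obtain ⟨w₀, -⟩ := hL0 v
  set b := d ^ (1 / 4 : ℝ) * (d * log d)
  have hB : ∀ w, adjRelDeg H L d v w ≤ b := adjRelDeg_le hL (by positivity) hμ (by positivity) hdeg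
  have hvar : ∑ u, ∑ x, vertexWt L p u x * (if x.1 then adjRelDeg H L d v x.2 else 0) ^ 2
      ≤ d ^ 2 * b := calc
    _ ≤ p * b * (d * log d) * d :=
      sum_vertexWt_mul_adjRelDeg_sq_le hL (hcard v ▸ (hL0 v).card_pos) hcard hp0 (havg v) hB hdeg
    _ = p * log d * (d ^ 2 * b) := by ring
    _ ≤ d ^ 2 * b := mul_le_of_le_one_left (by positivity) hplog
  have hlamb : d ^ (11 / 6 : ℝ) * b ≤ d ^ 2 * b := by
    gcongr
    exact (rpow_le_rpow_of_exponent_le hd1 (by norm_num : (11 / 6 : ℝ) ≤ 2)).trans_eq (rpow_two d)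
  rw [prE_eq_piExpect, ex_eq_piExpect]
  refine (piExpect_indicator_lt_abs_sub_le (vertexWt_nonneg hp0 (by nlinarith))
    (fun u => sum_vertexWt (hL0 u)) (fun _ => (false, w₀))
    (fun u σ x => relLostDeg_update_sub_le σ u x w₀) (fun _ x => ?_) hvar (by positivity)
    hlamb).trans (two_mul_exp_neg_le_exp_neg_rpow hd)
  split_ifs
  exacts [hB _, by positivity]
end
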